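/- arXiv:1808.07309 — 7 statements merged into one kernel-verified Lean document; each statement's English description precedes it below -/
import Mathlib

section
/- For every integrable real-valued measurable function g of (Y, V), E[(R/π(V)) · g(Y, V) | σ(V)] = E[g(Y, V) | σ(V)] P-a.s., and consequently E[(R/π(V)) · g(Y, V)] = E[g(Y, V)]. -/
/-!
Ignorability makes `σ(R)` and `σ(Y, L)` conditionally independent given `σ(V)`; since `σ(V)` is
the conditioning σ-algebra, the independence persists when `σ(V)` is adjoined to `σ(Y, L)`. Hence
`E[R | σ(Y, L, V)] = E[R | σ(V)] = π(V)`, and for the `σ(Y, L, V)`-measurable `Z = g(Y, V) / π(V)`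
the tower property gives `E[R Z | σ(V)] = π(V) E[Z | σ(V)] = E[g(Y, V) | σ(V)]`. Integrating
gives the unconditional identity.
-/

open MeasureTheory ProbabilityTheory

section

variable {Ω : Type*} {m mΩ : MeasurableSpace Ω} {μ : Measure Ω}

theorem MeasureTheory.Integrable.inv_mul_of_ae_le {f g : Ω → ℝ} (hg : Integrable g μ)
    (hf : AEMeasurable f μ) {δ : ℝ} (hδ : 0 < δ) (hfδ : ∀ᵐ ω ∂μ, δ ≤ f ω) :
    Integrable (fun ω => (f ω)⁻¹ * g ω) μ := by
  refine hg.bdd_mul (c := δ⁻¹) hf.inv.aestronglyMeasurable ?_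
  filter_upwards [hfδ] with ω hω
  rw [norm_inv, Real.norm_of_nonneg (hδ.le.trans hω)]
  exact inv_anti₀ hδ hω

namespace ProbabilityTheory

theorem condExp_indicator_inter_of_measurableSet_right [IsFiniteMeasure μ] {t u : Set Ω}
    (ht : MeasurableSet t) (hu : MeasurableSet[m] u) :
    μ⟦t ∩ u | m⟧ =ᵐ[μ] u.indicator (μ⟦t | m⟧) := by
  rw [Set.inter_comm, ← Set.indicator_indicator]
  exact condExp_indicator ((integrable_const 1).indicator ht) hu

theorem ae_norm_condExp_indicator_le_one (s : Set Ω) : ∀ᵐ ω ∂μ, ‖(μ⟦s | m⟧) ω‖ ≤ 1 :=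
  ae_bdd_abs_condExp_of_ae_bdd_abs <| .of_forall fun ω => by
    by_cases hω : ω ∈ s <;> simp [hω]

end ProbabilityTheory

end

namespace ProbabilityTheory

variable {Ω : Type*} {m' m₁ m₂ mΩ : MeasurableSpace Ω} [StandardBorelSpace Ω]
  {hm' : m' ≤ mΩ} {μ : Measure Ω} [IsFiniteMeasure μ]

theorem CondIndep.sup_right (hm₁ : m₁ ≤ mΩ) (hm₂ : m₂ ≤ mΩ) (h : CondIndep m' m₁ m₂ hm' μ) :
    CondIndep m' m₁ (m₂ ⊔ m') hm' μ := by
  set p := {s | ∃ t u, MeasurableSet[m₂] t ∧ MeasurableSet[m'] u ∧ t ∩ u = s}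
  have hp : IsPiSystem p := by
    rintro _ ⟨t, u, ht, hu, rfl⟩ _ ⟨t', u', ht', hu', rfl⟩ -
    exact ⟨t ∩ t', u ∩ u', ht.inter ht', hu.inter hu', (Set.inter_inter_inter_comm t u t' u').symm⟩
  have hgen : m₂ ⊔ m' = MeasurableSpace.generateFrom p := by
    refine le_antisymm (sup_le (fun t ht => ?_) (fun u hu => ?_))
      (MeasurableSpace.generateFrom_le ?_)
    · exact MeasurableSpace.measurableSet_generateFrom ⟨t, Set.univ, ht, .univ, Set.inter_univ t⟩
    · exact MeasurableSpace.measurableSet_generateFrom ⟨Set.univ, u, .univ, hu, Set.univ_inter u⟩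
    · rintro _ ⟨t, u, ht, hu, rfl⟩
      exact (le_sup_left (a := m₂) t ht).inter (le_sup_right (b := m') u hu)
  refine CondIndepSets.condIndep hm₁ (sup_le hm₂ hm')
    (@MeasurableSpace.isPiSystem_measurableSet Ω m₁) hp
    (@MeasurableSpace.generateFrom_measurableSet Ω m₁).symm hgen ?_
  rw [condIndepSets_iff _ _ {s | MeasurableSet[m₁] s} p (fun s hs => hm₁ s hs) ?_]
  -- `u` lies in the conditioning σ-algebra, so `1_u` factors out of both conditional expectations
  · rintro s _ hs ⟨t, u, ht, hu, rfl⟩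
    rw [condIndep_iff _ _ _ _ hm₁ hm₂] at h
    filter_upwards [h s t hs ht,
      condExp_indicator_inter_of_measurableSet_right (μ := μ) ((hm₁ s hs).inter (hm₂ t ht)) hu,
      condExp_indicator_inter_of_measurableSet_right (μ := μ) (hm₂ t ht) hu] with ω hst hstu htu
    rw [← Set.inter_assoc, hstu, Pi.mul_apply, htu]
    by_cases hω : ω ∈ u <;> simp [hω, hst]
  · rintro _ ⟨t, u, ht, hu, rfl⟩
    exact (hm₂ t ht).inter (hm' u hu)

theorem CondIndep.condExp_indicator_eq (hm₁ : m₁ ≤ mΩ) (hm₂ : m₂ ≤ mΩ) (hle : m' ≤ m₂)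
    (h : CondIndep m' m₁ m₂ hm' μ) {s : Set Ω} (hs : MeasurableSet[m₁] s) :
    μ⟦s | m₂⟧ =ᵐ[μ] μ⟦s | m'⟧ := by
  have hind {t : Set Ω} (ht : MeasurableSet t) : Integrable (t.indicator fun _ => (1 : ℝ)) μ :=
    (integrable_const 1).indicator ht
  refine (ae_eq_condExp_of_forall_setIntegral_eq hm₂ (hind (hm₁ s hs))
    (fun t _ _ => integrable_condExp.integrableOn) (fun t ht _ => ?_)
    (stronglyMeasurable_condExp.mono hle).aestronglyMeasurable).symm
  have hφt : Integrable (μ⟦s | m'⟧ * t.indicator fun _ => (1 : ℝ)) μ :=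
    (hind (hm₂ t ht)).bdd_mul (stronglyMeasurable_condExp.mono hm').aestronglyMeasurable
      (ae_norm_condExp_indicator_le_one s)
  calc ∫ ω in t, (μ⟦s | m'⟧) ω ∂μ
      = ∫ ω, (μ⟦s | m'⟧ * t.indicator fun _ => (1 : ℝ)) ω ∂μ := by
        rw [← integral_indicator (hm₂ t ht)]
        congr 1; ext ω; by_cases hω : ω ∈ t <;> simp [hω]
    _ = ∫ ω, (μ⟦s | m'⟧ * μ⟦t | m'⟧) ω ∂μ := by
        rw [← integral_condExp hm']
        exact integral_congr_ae (condExp_mul_of_stronglyMeasurable_left stronglyMeasurable_condExp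
          hφt (hind (hm₂ t ht)))
    _ = ∫ ω, (μ⟦s ∩ t | m'⟧) ω ∂μ :=
        integral_congr_ae ((condIndep_iff _ _ _ _ hm₁ hm₂ μ).mp h s t hs ht).symm
    _ = ∫ ω in t, s.indicator (fun _ => (1 : ℝ)) ω ∂μ := by
        rw [integral_condExp hm', ← integral_indicator (hm₂ t ht), Set.indicator_indicator,
          Set.inter_comm]

theorem CondIndep.condExp_indicator_mul (hm₁ : m₁ ≤ mΩ) (hm₂ : m₂ ≤ mΩ) (hle : m' ≤ m₂)
    (h : CondIndep m' m₁ m₂ hm' μ) {s : Set Ω} (hs : MeasurableSet[m₁] s) {Z : Ω → ℝ}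
    (hZ : StronglyMeasurable[m₂] Z) (hZint : Integrable Z μ) :
    μ[(s.indicator fun _ => (1 : ℝ)) * Z | m'] =ᵐ[μ] μ⟦s | m'⟧ * μ[Z | m'] := by
  have hsint : Integrable (s.indicator fun _ => (1 : ℝ)) μ :=
    (integrable_const 1).indicator (hm₁ s hs)
  have hsZint : Integrable ((s.indicator fun _ => (1 : ℝ)) * Z) μ :=
    hZint.bdd_mul (c := 1) hsint.aestronglyMeasurable (.of_forall fun ω => by
      by_cases hω : ω ∈ s <;> simp [hω])
  calc μ[(s.indicator fun _ => (1 : ℝ)) * Z | m']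
      =ᵐ[μ] μ[μ[(s.indicator fun _ => (1 : ℝ)) * Z | m₂] | m'] :=
        (condExp_condExp_of_le hle hm₂).symm
    _ =ᵐ[μ] μ[μ⟦s | m₂⟧ * Z | m'] :=
        condExp_congr_ae (condExp_mul_of_stronglyMeasurable_right hZ hsZint hsint)
    _ =ᵐ[μ] μ[μ⟦s | m'⟧ * Z | m'] :=
        condExp_congr_ae ((h.condExp_indicator_eq hm₁ hm₂ hle hs).mul .rfl)
    _ =ᵐ[μ] μ⟦s | m'⟧ * μ[Z | m'] :=
        condExp_stronglyMeasurable_mul_of_bound hm' stronglyMeasurable_condExp hZint 1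
          (ae_norm_condExp_indicator_le_one s)

end ProbabilityTheory

theorem ipw_conditional_unbiasedness_general
    {Ω : Type*} {mΩ : MeasurableSpace Ω} [StandardBorelSpace Ω]
    {P : Measure Ω} [IsProbabilityMeasure P]
    {𝒱 𝓛 𝒴 : Type*} [m𝒱 : MeasurableSpace 𝒱] [m𝓛 : MeasurableSpace 𝓛]
    [m𝒴 : MeasurableSpace 𝒴]
    (V : Ω → 𝒱) (L : Ω → 𝓛) (Y : Ω → 𝒴)
    (hV : Measurable V) (hL : Measurable L) (hY : Measurable Y)
    (R : Ω → ℝ) (hR : Measurable R) (hR01 : ∀ ω, R ω = 0 ∨ R ω = 1)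
    (π : 𝒱 → ℝ) (hπ : Measurable π)
    -- `π(V)` is a version of `E[R | σ(V)]`
    (hπV : P[R | MeasurableSpace.comap V m𝒱] =ᵐ[P] fun ω => π (V ω))
    -- positivity
    (δ : ℝ) (hδ0 : 0 < δ)
    (hpos : ∀ᵐ ω ∂P, δ ≤ π (V ω) ∧ π (V ω) ≤ 1 - δ)
    -- ignorability: `R ⟂ (Y, L) | σ(V)`
    (hign : CondIndepFun (MeasurableSpace.comap V m𝒱) (hV.comap_le) R
      (fun ω => (Y ω, L ω)) P)
    (g : 𝒴 × 𝒱 → ℝ) (hg : Measurable g)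
    (hgint : Integrable (fun ω => g (Y ω, V ω)) P) :
    (P[fun ω => (R ω / π (V ω)) * g (Y ω, V ω) | MeasurableSpace.comap V m𝒱]
        =ᵐ[P] P[fun ω => g (Y ω, V ω) | MeasurableSpace.comap V m𝒱]) ∧
      ∫ ω, (R ω / π (V ω)) * g (Y ω, V ω) ∂P = ∫ ω, g (Y ω, V ω) ∂P := by
  set m' := MeasurableSpace.comap V m𝒱
  have hm' : m' ≤ mΩ := hV.comap_le
  set W := fun ω => (Y ω, L ω)
  have hW : Measurable[mΩ] W := hY.prodMk hL
  set m₂ := MeasurableSpace.comap W inferInstance ⊔ m'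
  set A := R ⁻¹' {1}
  set Z : Ω → ℝ := fun ω => (π (V ω))⁻¹ * g (Y ω, V ω)
  have hRA : R = A.indicator fun _ => (1 : ℝ) :=
    funext fun ω => by rcases hR01 ω with h | h <;> simp [A, h]
  have hindep : CondIndep m' (MeasurableSpace.comap R inferInstance) m₂ hm' P :=
    ((condIndepFun_iff_condIndep _ _ _ _ _).mp hign).sup_right hR.comap_le hW.comap_le
  have hZm : StronglyMeasurable[m₂] Z := by
    have hYV : Measurable[m₂] fun ω => (Y ω, V ω) :=
      (measurable_fst.comp (comap_measurable W)).mono le_sup_left le_rfl |>.prodMk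
        ((comap_measurable V).mono le_sup_right le_rfl)
    exact (((hπ.comp measurable_snd).inv.mul hg).comp hYV).stronglyMeasurable
  have hZint : Integrable Z P :=
    hgint.inv_mul_of_ae_le (hπ.comp hV).aemeasurable hδ0 (hpos.mono fun _ h => h.1)
  have hpull : P[Z | m'] =ᵐ[P] fun ω => (π (V ω))⁻¹ * (P[fun ω => g (Y ω, V ω) | m']) ω :=
    condExp_mul_of_stronglyMeasurable_left
      ((hπ.comp (comap_measurable V)).inv.stronglyMeasurable) hZint hgint
  have hcond : P[fun ω => (R ω / π (V ω)) * g (Y ω, V ω) | m']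
      =ᵐ[P] P[fun ω => g (Y ω, V ω) | m'] := by
    have hRZ : (fun ω => (R ω / π (V ω)) * g (Y ω, V ω)) = (A.indicator fun _ => (1 : ℝ)) * Z := by
      ext ω; rw [hRA]; simp only [Pi.mul_apply, Z, div_eq_mul_inv, mul_assoc]
    rw [hRZ]
    filter_upwards [hindep.condExp_indicator_mul hR.comap_le (sup_le hW.comap_le hm') le_sup_right
      ⟨{1}, measurableSet_singleton 1, rfl⟩ hZm hZint, hπV, hpull, hpos]
      with ω hfactor hπω hpullω hposω
    rw [hfactor, Pi.mul_apply, ← hRA, hπω, hpullω, mul_inv_cancel_left₀ (by linarith [hposω.1])]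
  exact ⟨hcond, by rw [← integral_condExp hm', integral_congr_ae hcond, integral_condExp hm']⟩

/-- For every integrable real-valued measurable function `g` of `(Y, V)`,
`E[(R/π(V)) ⬝ g(Y, V) | σ(V)] = E[g(Y, V) | σ(V)]` almost surely, and consequently
`E[(R/π(V)) ⬝ g(Y, V)] = E[g(Y, V)]`. -/
theorem ipw_conditional_unbiasedness
    {Ω : Type*} {mΩ : MeasurableSpace Ω} [StandardBorelSpace Ω] [Nonempty Ω]
    {P : Measure Ω} [IsProbabilityMeasure P]
    {𝒱 𝓛 𝒴 : Type*} [m𝒱 : MeasurableSpace 𝒱] [m𝓛 : MeasurableSpace 𝓛]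
    [m𝒴 : MeasurableSpace 𝒴]
    (V : Ω → 𝒱) (L : Ω → 𝓛) (Y : Ω → 𝒴)
    (hV : Measurable V) (hL : Measurable L) (hY : Measurable Y)
    (R : Ω → ℝ) (hR : Measurable R) (hR01 : ∀ ω, R ω = 0 ∨ R ω = 1)
    (π : 𝒱 → ℝ) (hπ : Measurable π)
    -- `π(V)` is a version of `E[R | σ(V)]`
    (hπV : P[R | MeasurableSpace.comap V m𝒱] =ᵐ[P] fun ω => π (V ω))
    -- positivity
    (δ : ℝ) (hδ0 : 0 < δ) (hδhalf : δ < 1 / 2)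
    (hpos : ∀ᵐ ω ∂P, δ ≤ π (V ω) ∧ π (V ω) ≤ 1 - δ)
    -- ignorability: `R ⟂ (Y, L) | σ(V)`
    (hign : CondIndepFun (MeasurableSpace.comap V m𝒱) (hV.comap_le) R
      (fun ω => (Y ω, L ω)) P)
    (g : 𝒴 × 𝒱 → ℝ) (hg : Measurable g)
    (hgint : Integrable (fun ω => g (Y ω, V ω)) P) :
    (P[fun ω => (R ω / π (V ω)) * g (Y ω, V ω) | MeasurableSpace.comap V m𝒱]
        =ᵐ[P] P[fun ω => g (Y ω, V ω) | MeasurableSpace.comap V m𝒱]) ∧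
      ∫ ω, (R ω / π (V ω)) * g (Y ω, V ω) ∂P = ∫ ω, g (Y ω, V ω) ∂P :=
  ipw_conditional_unbiasedness_general (mΩ := mΩ) (m𝒱 := m𝒱) (m𝓛 := m𝓛) (m𝒴 := m𝒴) V L Y hV hL hY R
    hR hR01 π hπ hπV δ hδ0 hpos hign g hg hgint
end

section
/- For every integrable real-valued measurable function h of (V, L), E[((1 − R)/(1 − π(V))) · h(V, L) | σ(V)] = E[h(V, L) | σ(V)] P-a.s., and consequently E[((1 − R)/(1 − π(V))) · h(V, L)] = E[h(V, L)]. -/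
/-!
Write `S = {R = 0}`, so that `1 - R = 𝟙_S` and `E[𝟙_S | σ(V)] = 1 - π(V)`. Ignorability makes `S`
conditionally independent of every event `{L ∈ C}` given `σ(V)`, so the two finite measures
`E[𝟙_S ; (V, L) ∈ ·]` and `E[1 - π(V) ; (V, L) ∈ ·]` on `𝒱 × 𝓛` agree on rectangles, hence everywhere.
Integrating `𝟙_{B × 𝓛} ⬝ h / (1 - π)` against them shows that the weighted variable and `h(V, L)`
have the same integral over every `{V ∈ B}`, which characterises their conditional expectations;
positivity makes the weight bounded, so the weighted variable is integrable.
-/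

open MeasureTheory ProbabilityTheory

section

variable {Ω : Type*} {m mΩ : MeasurableSpace Ω} {P : Measure Ω} {S T A : Set Ω} {R : Ω → ℝ}

lemma condExp_indicator_nonneg : 0 ≤ᵐ[P] P⟦S | m⟧ :=
  condExp_nonneg (ae_of_all _ fun _ => Set.indicator_nonneg (fun _ _ => zero_le_one) _)

lemma indicator_preimage_zero_eq_one_sub (hR01 : ∀ ω, R ω = 0 ∨ R ω = 1) :
    (R ⁻¹' {0}).indicator (fun _ => (1 : ℝ)) = fun ω => 1 - R ω := by
  ext ω
  rcases hR01 ω with hω | hω <;> simp [hω]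

lemma condExp_indicator_preimage_zero_eq [IsFiniteMeasure P] (hm : m ≤ mΩ) (hR : Measurable R)
    (hR01 : ∀ ω, R ω = 0 ∨ R ω = 1) : P⟦R ⁻¹' {0} | m⟧ =ᵐ[P] 1 - P[R | m] := by
  have hRint : Integrable R P := .of_bound hR.aestronglyMeasurable 1
    (ae_of_all _ fun ω => by rcases hR01 ω with hω | hω <;> simp [hω])
  rw [indicator_preimage_zero_eq_one_sub hR01]
  filter_upwards [condExp_sub (integrable_const 1) hRint m] with ω hω
  rw [show (fun ω => 1 - R ω) = (fun _ => (1 : ℝ)) - R from rfl, hω, condExp_const hm]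
  rfl

variable [StandardBorelSpace Ω] [IsFiniteMeasure P]

lemma measureReal_inter_eq_setIntegral_condExp (hm : m ≤ mΩ) (hS : MeasurableSet S)
    (hT : MeasurableSet T) (hA : MeasurableSet[m] A) (hST : CondIndepSet m hm S T P) :
    P.real (S ∩ (A ∩ T)) = ∫ ω in A ∩ T, (P⟦S | m⟧) ω ∂P := by
  rw [condIndepSet_iff m hm S T hS hT] at hST
  have hmul : P⟦S | m⟧ * T.indicator (fun _ => 1) = T.indicator (P⟦S | m⟧) := by
    ext ω; by_cases hω : ω ∈ T <;> simp [hω]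
  have hint : Integrable (P⟦S | m⟧ * T.indicator (fun _ => 1)) P :=
    hmul ▸ integrable_condExp.indicator hT
  calc P.real (S ∩ (A ∩ T)) = ∫ ω in A, (S ∩ T).indicator (fun _ => (1 : ℝ)) ω ∂P := by
        rw [integral_indicator_const _ (hS.inter hT), measureReal_restrict_apply (hS.inter hT),
          smul_eq_mul, mul_one, Set.inter_assoc, Set.inter_comm T]
    _ = ∫ ω in A, (P⟦S ∩ T | m⟧) ω ∂P :=
        (setIntegral_condExp hm ((integrable_const _).indicator (hS.inter hT)) hA).symm
    _ = ∫ ω in A, P[P⟦S | m⟧ * T.indicator (fun _ => 1) | m] ω ∂P := by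
        refine setIntegral_congr_ae (hm A hA) ?_
        filter_upwards [hST, condExp_mul_of_stronglyMeasurable_left stronglyMeasurable_condExp
          hint ((integrable_const _).indicator hT)] with ω hST hpull _
        rw [hST, hpull]
    _ = ∫ ω in A ∩ T, (P⟦S | m⟧) ω ∂P := by
        rw [setIntegral_condExp hm hint hA, hmul, integral_indicator hT,
          Measure.restrict_restrict hT, Set.inter_comm]

variable {𝒱 𝓛 : Type*} {m𝒱 : MeasurableSpace 𝒱} [MeasurableSpace 𝓛] {V : Ω → 𝒱} {L : Ω → 𝓛}

lemma map_restrict_eq_map_withDensity_condExp (hV : Measurable V) (hL : Measurable L)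
    (hS : MeasurableSet S)
    (hind : ∀ C, MeasurableSet C → CondIndepSet (m𝒱.comap V) hV.comap_le S (L ⁻¹' C) P) :
    (P.restrict S).map (fun ω => (V ω, L ω))
      = (P.withDensity fun ω => ENNReal.ofReal ((P⟦S | m𝒱.comap V⟧) ω)).map
          (fun ω => (V ω, L ω)) := by
  refine Measure.ext_prod fun {B C} hB hC => ?_
  have hVL : Measurable fun ω => (V ω, L ω) := hV.prodMk hL
  rw [Measure.map_apply hVL (hB.prod hC), Measure.map_apply hVL (hB.prod hC),
    Measure.restrict_apply (hVL (hB.prod hC)), withDensity_apply _ (hVL (hB.prod hC)),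
    Set.mk_preimage_prod, ← ofReal_measureReal,
    ← ofReal_integral_eq_lintegral_ofReal integrable_condExp.restrict
      (ae_restrict_of_ae condExp_indicator_nonneg), Set.inter_comm,
    measureReal_inter_eq_setIntegral_condExp hV.comap_le hS (hL hC) ⟨B, hB, rfl⟩ (hind C hC)]

lemma setIntegral_comp_eq_integral_condExp_mul (hV : Measurable V) (hL : Measurable L)
    (hS : MeasurableSet S)
    (hind : ∀ C, MeasurableSet C → CondIndepSet (m𝒱.comap V) hV.comap_le S (L ⁻¹' C) P)
    {g : 𝒱 × 𝓛 → ℝ} (hg : Measurable g) :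
    ∫ ω in S, g (V ω, L ω) ∂P = ∫ ω, (P⟦S | m𝒱.comap V⟧) ω * g (V ω, L ω) ∂P := by
  have hVL : Measurable fun ω => (V ω, L ω) := hV.prodMk hL
  rw [← integral_map hVL.aemeasurable hg.aestronglyMeasurable,
    map_restrict_eq_map_withDensity_condExp hV hL hS hind,
    integral_map hVL.aemeasurable hg.aestronglyMeasurable,
    integral_withDensity_eq_integral_toReal_smul
      (stronglyMeasurable_condExp.mono hV.comap_le).measurable.ennreal_ofReal
      (ae_of_all _ fun _ => ENNReal.ofReal_lt_top)]
  refine integral_congr_ae ?_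
  filter_upwards [condExp_indicator_nonneg] with ω hω
  rw [ENNReal.toReal_ofReal hω, smul_eq_mul]

lemma setIntegral_preimage_indicator_comp_eq (hV : Measurable V) (hL : Measurable L)
    (hS : MeasurableSet S)
    (hind : ∀ C, MeasurableSet C → CondIndepSet (m𝒱.comap V) hV.comap_le S (L ⁻¹' C) P)
    {k : 𝒱 × 𝓛 → ℝ} (hk : Measurable k) {B : Set 𝒱} (hB : MeasurableSet B) :
    ∫ ω in V ⁻¹' B, S.indicator (fun ω => k (V ω, L ω)) ω ∂P
      = ∫ ω in V ⁻¹' B, (P⟦S | m𝒱.comap V⟧) ω * k (V ω, L ω) ∂P := by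
  have hkB : ∀ ω, (Prod.fst ⁻¹' B).indicator k (V ω, L ω)
      = (V ⁻¹' B).indicator (fun ω => k (V ω, L ω)) ω := fun ω =>
    (Set.indicator_comp_right (fun ω => (V ω, L ω))).symm
  have key := setIntegral_comp_eq_integral_condExp_mul hV hL hS hind
    (hk.indicator (measurable_fst hB))
  simp only [hkB, ← Set.indicator_mul_right] at key
  rw [setIntegral_indicator hS, Set.inter_comm, ← setIntegral_indicator (hV hB), key,
    integral_indicator (hV hB)]

variable {q : 𝒱 → ℝ} {h : 𝒱 × 𝓛 → ℝ}

lemma setIntegral_preimage_indicator_div_eq (hV : Measurable V) (hL : Measurable L)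
    (hS : MeasurableSet S)
    (hind : ∀ C, MeasurableSet C → CondIndepSet (m𝒱.comap V) hV.comap_le S (L ⁻¹' C) P)
    (hq : Measurable q) (hcond : P⟦S | m𝒱.comap V⟧ =ᵐ[P] fun ω => q (V ω))
    (hq0 : ∀ᵐ ω ∂P, q (V ω) ≠ 0) (hh : Measurable h) {B : Set 𝒱} (hB : MeasurableSet B) :
    ∫ ω in V ⁻¹' B, S.indicator (fun ω => h (V ω, L ω) / q (V ω)) ω ∂P
      = ∫ ω in V ⁻¹' B, h (V ω, L ω) ∂P := by
  rw [setIntegral_preimage_indicator_comp_eq hV hL hS hind (k := fun p => h p / q p.1)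
    (hh.div (hq.comp measurable_fst)) hB]
  refine setIntegral_congr_ae (hV hB) ?_
  filter_upwards [hcond, hq0] with ω hcond hq0 _
  rw [hcond, mul_div_cancel₀ _ hq0]

lemma condExp_indicator_div_eq (hV : Measurable V) (hL : Measurable L) (hS : MeasurableSet S)
    (hind : ∀ C, MeasurableSet C → CondIndepSet (m𝒱.comap V) hV.comap_le S (L ⁻¹' C) P)
    (hq : Measurable q) (hcond : P⟦S | m𝒱.comap V⟧ =ᵐ[P] fun ω => q (V ω))
    {δ : ℝ} (hδ : 0 < δ) (hqδ : ∀ᵐ ω ∂P, δ ≤ q (V ω)) (hh : Measurable h)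
    (hhint : Integrable (fun ω => h (V ω, L ω)) P) :
    P[S.indicator (fun ω => h (V ω, L ω) / q (V ω)) | m𝒱.comap V]
      =ᵐ[P] P[fun ω => h (V ω, L ω) | m𝒱.comap V] := by
  have hint : Integrable (fun ω => h (V ω, L ω) / q (V ω)) P := by
    refine (hhint.norm.div_const δ).mono'
      ((hh.comp (hV.prodMk hL)).div (hq.comp hV)).aestronglyMeasurable ?_
    filter_upwards [hqδ] with ω hqδ
    rw [norm_div, Real.norm_of_nonneg (hδ.le.trans hqδ)]
    gcongr
  refine (ae_eq_condExp_of_forall_setIntegral_eq hV.comap_le (hint.indicator hS)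
    (fun _ _ _ => integrable_condExp.integrableOn) ?_
    stronglyMeasurable_condExp.aestronglyMeasurable).symm
  rintro _ ⟨B, hB, rfl⟩ -
  rw [setIntegral_condExp hV.comap_le hhint ⟨B, hB, rfl⟩,
    setIntegral_preimage_indicator_div_eq hV hL hS hind hq hcond
      (hqδ.mono fun ω hω => (hδ.trans_le hω).ne') hh hB]

end

theorem ipw_conditional_unbiasedness_source_B_general
    {Ω : Type*} {mΩ : MeasurableSpace Ω} [StandardBorelSpace Ω]
    {P : Measure Ω} [IsProbabilityMeasure P]
    {𝒱 𝓛 𝒴 : Type*} [m𝒱 : MeasurableSpace 𝒱] [m𝓛 : MeasurableSpace 𝓛]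
    [m𝒴 : MeasurableSpace 𝒴]
    (V : Ω → 𝒱) (L : Ω → 𝓛) (Y : Ω → 𝒴)
    (hV : Measurable V) (hL : Measurable L)
    (R : Ω → ℝ) (hR : Measurable R) (hR01 : ∀ ω, R ω = 0 ∨ R ω = 1)
    (π : 𝒱 → ℝ) (hπ : Measurable π)
    -- `π(V)` is a version of `E[R | σ(V)]`
    (hπV : P[R | MeasurableSpace.comap V m𝒱] =ᵐ[P] fun ω => π (V ω))
    -- positivity
    (δ : ℝ) (hδ0 : 0 < δ)
    (hpos : ∀ᵐ ω ∂P, δ ≤ π (V ω) ∧ π (V ω) ≤ 1 - δ)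
    -- ignorability: `R ⟂ (Y, L) | σ(V)`
    (hign : CondIndepFun (MeasurableSpace.comap V m𝒱) (hV.comap_le) R
      (fun ω => (Y ω, L ω)) P)
    (h : 𝒱 × 𝓛 → ℝ) (hh : Measurable h)
    (hhint : Integrable (fun ω => h (V ω, L ω)) P) :
    (P[fun ω => ((1 - R ω) / (1 - π (V ω))) * h (V ω, L ω) | MeasurableSpace.comap V m𝒱]
        =ᵐ[P] P[fun ω => h (V ω, L ω) | MeasurableSpace.comap V m𝒱]) ∧
      ∫ ω, ((1 - R ω) / (1 - π (V ω))) * h (V ω, L ω) ∂P = ∫ ω, h (V ω, L ω) ∂P := by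
  have hS : MeasurableSet (R ⁻¹' {0}) := hR (measurableSet_singleton 0)
  have hind : ∀ C, MeasurableSet C →
      CondIndepSet (m𝒱.comap V) hV.comap_le (R ⁻¹' {0}) (L ⁻¹' C) P := fun C hC =>
    (condIndepFun_iff_condIndepSet_preimage hR hL).mp (hign.comp measurable_id measurable_snd)
      {0} C (measurableSet_singleton 0) hC
  have hcond : P⟦R ⁻¹' {0} | m𝒱.comap V⟧ =ᵐ[P] fun ω => 1 - π (V ω) := by
    filter_upwards [condExp_indicator_preimage_zero_eq hV.comap_le hR hR01, hπV] with ω hRω hπω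
    rw [hRω, Pi.sub_apply, hπω, Pi.one_apply]
  have hweight : (fun ω => (1 - R ω) / (1 - π (V ω)) * h (V ω, L ω))
      = (R ⁻¹' {0}).indicator fun ω => h (V ω, L ω) / (1 - π (V ω)) := by
    ext ω
    rcases hR01 ω with hω | hω <;> simp [hω, div_eq_inv_mul]
  have hce := condExp_indicator_div_eq (q := fun v => 1 - π v) hV hL hS hind
    (measurable_const.sub hπ) hcond hδ0
    (hpos.mono fun ω hω => by linarith [hω.2]) hh hhint
  rw [hweight]
  refine ⟨hce, ?_⟩
  rw [← integral_condExp hV.comap_le, integral_congr_ae hce, integral_condExp hV.comap_le]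

/-- For every integrable real-valued measurable function `h` of `(V, L)`,
`E[((1 − R)/(1 − π(V))) ⬝ h(V, L) | σ(V)] = E[h(V, L) | σ(V)]` almost surely, and
consequently `E[((1 − R)/(1 − π(V))) ⬝ h(V, L)] = E[h(V, L)]`. -/
theorem ipw_conditional_unbiasedness_source_B
    {Ω : Type*} {mΩ : MeasurableSpace Ω} [StandardBorelSpace Ω] [Nonempty Ω]
    {P : Measure Ω} [IsProbabilityMeasure P]
    {𝒱 𝓛 𝒴 : Type*} [m𝒱 : MeasurableSpace 𝒱] [m𝓛 : MeasurableSpace 𝓛]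
    [m𝒴 : MeasurableSpace 𝒴]
    (V : Ω → 𝒱) (L : Ω → 𝓛) (Y : Ω → 𝒴)
    (hV : Measurable V) (hL : Measurable L) (hY : Measurable Y)
    (R : Ω → ℝ) (hR : Measurable R) (hR01 : ∀ ω, R ω = 0 ∨ R ω = 1)
    (π : 𝒱 → ℝ) (hπ : Measurable π)
    -- `π(V)` is a version of `E[R | σ(V)]`
    (hπV : P[R | MeasurableSpace.comap V m𝒱] =ᵐ[P] fun ω => π (V ω))
    -- positivity
    (δ : ℝ) (hδ0 : 0 < δ) (hδhalf : δ < 1 / 2)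
    (hpos : ∀ᵐ ω ∂P, δ ≤ π (V ω) ∧ π (V ω) ≤ 1 - δ)
    -- ignorability: `R ⟂ (Y, L) | σ(V)`
    (hign : CondIndepFun (MeasurableSpace.comap V m𝒱) (hV.comap_le) R
      (fun ω => (Y ω, L ω)) P)
    (h : 𝒱 × 𝓛 → ℝ) (hh : Measurable h)
    (hhint : Integrable (fun ω => h (V ω, L ω)) P) :
    (P[fun ω => ((1 - R ω) / (1 - π (V ω))) * h (V ω, L ω) | MeasurableSpace.comap V m𝒱]
        =ᵐ[P] P[fun ω => h (V ω, L ω) | MeasurableSpace.comap V m𝒱]) ∧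
      ∫ ω, ((1 - R ω) / (1 - π (V ω))) * h (V ω, L ω) ∂P = ∫ ω, h (V ω, L ω) ∂P :=
  ipw_conditional_unbiasedness_source_B_general (mΩ := mΩ) (m𝒱 := m𝒱) (m𝓛 := m𝓛) (m𝒴 := m𝒴) V L Y hV
    hL R hR hR01 π hπ hπV δ hδ0 hpos hign h hh hhint
end

section
/- For every integrable real-valued measurable function g of (Y, V), the parallel inverse-probability-weighted estimating function U_g = (R/π(V)) · g(Y, V) − ((1 − R)/(1 − π(V))) · E[g(Y, V) | V, L] has conditional mean zero given the covariates: E[U_g | σ(V, L)] = 0 P-a.s. -/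
/-!
Ignorability upgrades `π(V) = E[R | V]` to `π(V) = E[R | V, Y, L]`: on a generator `A ∩ B` of
`σ(V, Y, L)`, with `A ∈ σ(V)` and `B ∈ σ(Y, L)`, conditional independence turns `E[R 1_B | V]` into
`π(V) P(B | V)`. Given `(V, Y, L)` the weight `g(Y, V) / π(V)` pulls out of the first term, which
therefore has conditional mean `E[g(Y, V) | V, L]` by the tower property. In the second term the
`(V, L)`-measurable factor `E[g(Y, V) | V, L] / (1 - π(V))` pulls out, and
`E[1 - R | V, L] = 1 - π(V)`. Positivity bounds both weights by `1 / δ`.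
-/

open MeasureTheory ProbabilityTheory MeasurableSpace Set

section

variable {Ω : Type*}

theorem isPiSystem_image2_inter (m₁ m₂ : MeasurableSpace Ω) :
    IsPiSystem (image2 (· ∩ ·) {s | MeasurableSet[m₁] s} {t | MeasurableSet[m₂] t}) := by
  rintro _ ⟨a, ha, b, hb, rfl⟩ _ ⟨c, hc, d, hd, rfl⟩ -
  exact ⟨a ∩ c, ha.inter hc, b ∩ d, hb.inter hd, inter_inter_inter_comm a c b d⟩

theorem sup_eq_generateFrom_image2_inter (m₁ m₂ : MeasurableSpace Ω) :
    m₁ ⊔ m₂ =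
      generateFrom (image2 (· ∩ ·) {s | MeasurableSet[m₁] s} {t | MeasurableSet[m₂] t}) := by
  refine le_antisymm (sup_le (fun s hs => ?_) (fun t ht => ?_)) (generateFrom_le ?_)
  · exact measurableSet_generateFrom ⟨s, hs, univ, @MeasurableSet.univ _ m₂, inter_univ s⟩
  · exact measurableSet_generateFrom ⟨univ, @MeasurableSet.univ _ m₁, t, ht, univ_inter t⟩
  · rintro _ ⟨s, hs, t, ht, rfl⟩
    exact (le_sup_left (b := m₂) s hs).inter (le_sup_right (a := m₁) t ht)

section Integral

variable {E : Type*} [NormedAddCommGroup E] [NormedSpace ℝ E] {m m₀ : MeasurableSpace Ω}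
  {μ : Measure Ω}

theorem setIntegral_eq_of_isPiSystem (hm : m ≤ m₀) {S : Set (Set Ω)}
    (h_eq : m = generateFrom S) (h_pi : IsPiSystem S) (h_univ : univ ∈ S) {f g : Ω → E}
    (hf : Integrable f μ) (hg : Integrable g μ)
    (basic : ∀ t ∈ S, ∫ x in t, f x ∂μ = ∫ x in t, g x ∂μ) {t : Set Ω}
    (ht : MeasurableSet[m] t) : ∫ x in t, f x ∂μ = ∫ x in t, g x ∂μ := by
  induction t, ht using MeasurableSpace.induction_on_inter h_eq h_pi with
  | empty => simp
  | basic t ht => exact basic t ht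
  | compl t ht ih =>
    have h_total := basic univ h_univ
    rw [setIntegral_univ, setIntegral_univ] at h_total
    rw [setIntegral_compl (hm t ht) hf, setIntegral_compl (hm t ht) hg, ih, h_total]
  | iUnion t hdisj ht ih =>
    rw [integral_iUnion (fun i => hm _ (ht i)) hdisj hf.integrableOn,
      integral_iUnion (fun i => hm _ (ht i)) hdisj hg.integrableOn]
    exact tsum_congr ih

end Integral

section CondIndep

variable {m m₁ m₂ mΩ : MeasurableSpace Ω} [StandardBorelSpace Ω] {μ : Measure Ω}
  [IsFiniteMeasure μ]

theorem condExp_indicator_sup_ae_eq_of_condIndep (hm : m ≤ mΩ) (hm₁ : m₁ ≤ mΩ) (hm₂ : m₂ ≤ mΩ)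
    (h : CondIndep m m₁ m₂ hm μ) {s : Set Ω} (hs : MeasurableSet[m₁] s) :
    μ⟦s | m ⊔ m₂⟧ =ᵐ[μ] μ⟦s | m⟧ := by
  have hsup : m ⊔ m₂ ≤ mΩ := sup_le hm hm₂
  have h_ind : ∀ {t : Set Ω}, MeasurableSet t → Integrable (t.indicator fun _ => (1 : ℝ)) μ :=
    fun ht => (integrable_const 1).indicator ht
  refine (ae_eq_condExp_of_forall_setIntegral_eq hsup (h_ind (hm₁ s hs))
    (fun _ _ _ => integrable_condExp.integrableOn) (fun t ht _ => ?_)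
    (stronglyMeasurable_condExp.mono (le_sup_left : m ≤ m ⊔ m₂)).aestronglyMeasurable).symm
  refine setIntegral_eq_of_isPiSystem hsup (sup_eq_generateFrom_image2_inter m m₂)
    (isPiSystem_image2_inter m m₂) ⟨univ, .univ, univ, .univ, inter_self univ⟩
    integrable_condExp (h_ind (hm₁ s hs)) ?_ ht
  rintro _ ⟨a, ha, b, hb, rfl⟩
  have hb₀ : MeasurableSet b := hm₂ b hb
  have h_mul : b.indicator (μ⟦s | m⟧) = μ⟦s | m⟧ * b.indicator fun _ => 1 := by
    ext ω
    by_cases hω : ω ∈ b <;> simp [hω]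
  have h_int : Integrable (μ⟦s | m⟧ * b.indicator fun _ => 1) μ :=
    h_mul ▸ integrable_condExp.indicator hb₀
  calc ∫ x in a ∩ b, (μ⟦s | m⟧) x ∂μ
      = ∫ x in a, μ[μ⟦s | m⟧ * b.indicator fun _ => 1 | m] x ∂μ := by
        rw [setIntegral_condExp hm h_int ha, ← h_mul, setIntegral_indicator hb₀]
    _ = ∫ x in a, (μ⟦s ∩ b | m⟧) x ∂μ := by
        refine setIntegral_congr_ae (hm a ha) ?_
        filter_upwards [condExp_mul_of_stronglyMeasurable_left stronglyMeasurable_condExp h_int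
          (h_ind hb₀), (condIndep_iff m m₁ m₂ hm hm₁ hm₂ μ).1 h s b hs hb] with ω h₁ h₂ _
        rw [h₁, h₂]
    _ = ∫ x in a ∩ b, s.indicator (fun _ => (1 : ℝ)) x ∂μ := by
        rw [setIntegral_condExp hm (h_ind ((hm₁ s hs).inter hb₀)) ha, ← setIntegral_indicator hb₀,
          indicator_indicator, inter_comm]

theorem condExp_sup_comap_ae_eq_of_condIndepFun {β : Type*} [mβ : MeasurableSpace β]
    (hm : m ≤ mΩ) {R : Ω → ℝ} (hR : Measurable R) (hR01 : ∀ ω, R ω = 0 ∨ R ω = 1)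
    {Z : Ω → β} (hZ : Measurable Z) (h : CondIndepFun m hm R Z μ) :
    μ[R | m ⊔ mβ.comap Z] =ᵐ[μ] μ[R | m] := by
  have hR_ind : (R ⁻¹' {1}).indicator 1 = R := by
    ext ω
    rcases hR01 ω with h | h <;> simp [h]
  rw [← hR_ind]
  exact condExp_indicator_sup_ae_eq_of_condIndep hm hR.comap_le hZ.comap_le
    ((condIndepFun_iff_condIndep m hm R Z μ).1 h) ⟨{1}, measurableSet_singleton 1, rfl⟩

end CondIndep

section Weighting

variable {m m' mΩ : MeasurableSpace Ω} {μ : Measure Ω} {X p f : Ω → ℝ}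

theorem condExp_ae_eq_of_condExp_ae_eq_of_le [IsFiniteMeasure μ] (hmm' : m ≤ m')
    (hm' : m' ≤ mΩ) (hp : StronglyMeasurable[m] p) (hp_int : Integrable p μ)
    (hXp : μ[X | m'] =ᵐ[μ] p) : μ[X | m] =ᵐ[μ] p :=
  (condExp_condExp_of_le hmm' hm').symm.trans <| (condExp_congr_ae hXp).trans <|
    .of_eq (condExp_of_stronglyMeasurable (hmm'.trans hm') hp hp_int)

theorem condExp_div_mul_ae_eq (hp : StronglyMeasurable[m] p) (hf : StronglyMeasurable[m] f)
    (hX : Integrable X μ) (hint : Integrable (fun ω => X ω / p ω * f ω) μ)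
    (hXp : μ[X | m] =ᵐ[μ] p) (hp0 : ∀ᵐ ω ∂μ, p ω ≠ 0) :
    μ[fun ω => X ω / p ω * f ω | m] =ᵐ[μ] f := by
  have h_eq : (fun ω => X ω / p ω * f ω) = f / p * X := by
    ext ω
    simp only [Pi.mul_apply, Pi.div_apply]
    ring
  rw [h_eq] at hint ⊢
  filter_upwards [condExp_mul_of_stronglyMeasurable_left
    (hf.measurable.div hp.measurable).stronglyMeasurable hint hX, hXp, hp0] with ω h₁ h₂ h₃
  rw [h₁, Pi.mul_apply, h₂, Pi.div_apply, div_mul_cancel₀ _ h₃]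

theorem integrable_div_mul_of_abs_le_one {δ : ℝ} (hδ : 0 < δ) (hX : Measurable X)
    (hp : Measurable p) (hf : Integrable f μ) (hX1 : ∀ ω, |X ω| ≤ 1)
    (hpδ : ∀ᵐ ω ∂μ, δ ≤ p ω) : Integrable (fun ω => X ω / p ω * f ω) μ := by
  refine hf.bdd_mul (c := δ⁻¹) (hX.div hp).aestronglyMeasurable ?_
  filter_upwards [hpδ] with ω hω
  rw [Real.norm_eq_abs, abs_div, abs_of_pos (hδ.trans_le hω), ← one_div]
  exact div_le_div₀ zero_le_one (hX1 ω) hδ hω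

theorem condExp_ipw_sub_augmentation_ae_eq_zero [IsFiniteMeasure μ] (hmm' : m ≤ m')
    (hm' : m' ≤ mΩ) {R : Ω → ℝ} (hR : Measurable R) (hR01 : ∀ ω, R ω = 0 ∨ R ω = 1)
    (hp : StronglyMeasurable[m] p) {δ : ℝ} (hδ : 0 < δ)
    (hpδ : ∀ᵐ ω ∂μ, δ ≤ p ω ∧ p ω ≤ 1 - δ) (hRp : μ[R | m'] =ᵐ[μ] p)
    (hf : StronglyMeasurable[m'] f) (hf_int : Integrable f μ) :
    μ[fun ω => R ω / p ω * f ω - (1 - R ω) / (1 - p ω) * μ[f | m] ω | m] =ᵐ[μ] 0 := by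
  have hm : m ≤ mΩ := hmm'.trans hm'
  have hp₀ : Measurable p := hp.measurable.mono hm le_rfl
  have hR_abs : ∀ ω, |R ω| ≤ 1 := fun ω => by rcases hR01 ω with h | h <;> simp [h]
  have hR1_abs : ∀ ω, |1 - R ω| ≤ 1 := fun ω => by rcases hR01 ω with h | h <;> simp [h]
  have hR_int : Integrable R μ := .of_bound hR.aestronglyMeasurable 1 (.of_forall hR_abs)
  have hp_low : ∀ᵐ ω ∂μ, δ ≤ p ω := hpδ.mono fun _ h => h.1
  have hp_high : ∀ᵐ ω ∂μ, δ ≤ 1 - p ω := hpδ.mono fun _ h => by linarith [h.2]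
  have hp_int : Integrable p μ :=
    .of_bound hp₀.aestronglyMeasurable 1 (hpδ.mono fun _ h => abs_le.2 ⟨by linarith, by linarith⟩)
  have hIPW_int : Integrable (fun ω => R ω / p ω * f ω) μ :=
    integrable_div_mul_of_abs_le_one hδ hR hp₀ hf_int hR_abs hp_low
  have hAug_int : Integrable (fun ω => (1 - R ω) / (1 - p ω) * μ[f | m] ω) μ :=
    integrable_div_mul_of_abs_le_one hδ (measurable_const.sub hR) (measurable_const.sub hp₀)
      integrable_condExp hR1_abs hp_high
  have h1Rp : μ[fun ω => 1 - R ω | m] =ᵐ[μ] fun ω => 1 - p ω := by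
    filter_upwards [condExp_sub (integrable_const 1) hR_int m,
      condExp_ae_eq_of_condExp_ae_eq_of_le hmm' hm' hp hp_int hRp] with ω h₁ h₂
    rw [show (fun ω => 1 - R ω) = (fun _ => (1 : ℝ)) - R from rfl, h₁, Pi.sub_apply, h₂,
      condExp_const hm]
  have hIPW : μ[fun ω => R ω / p ω * f ω | m] =ᵐ[μ] μ[f | m] :=
    (condExp_condExp_of_le hmm' hm').symm.trans <| condExp_congr_ae <|
      condExp_div_mul_ae_eq (hp.mono hmm') hf hR_int hIPW_int hRp
        (hp_low.mono fun _ h => (hδ.trans_le h).ne')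
  have hAug : μ[fun ω => (1 - R ω) / (1 - p ω) * μ[f | m] ω | m] =ᵐ[μ] μ[f | m] :=
    condExp_div_mul_ae_eq (measurable_const.sub hp.measurable).stronglyMeasurable
      stronglyMeasurable_condExp ((integrable_const 1).sub hR_int) hAug_int h1Rp
      (hp_high.mono fun _ h => (hδ.trans_le h).ne')
  filter_upwards [condExp_sub hIPW_int hAug_int m, hIPW, hAug] with ω h h₁ h₂
  exact h.trans (by rw [Pi.sub_apply, h₁, h₂, sub_self]; rfl)

end Weighting

end

theorem ipw_estimating_function_conditional_mean_zero_general
    {Ω : Type*} {mΩ : MeasurableSpace Ω} [StandardBorelSpace Ω]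
    {P : Measure Ω} [IsProbabilityMeasure P]
    {𝒱 𝓛 𝒴 : Type*} [m𝒱 : MeasurableSpace 𝒱] [m𝓛 : MeasurableSpace 𝓛]
    [m𝒴 : MeasurableSpace 𝒴]
    (V : Ω → 𝒱) (L : Ω → 𝓛) (Y : Ω → 𝒴)
    (hV : Measurable V) (hL : Measurable L) (hY : Measurable Y)
    (R : Ω → ℝ) (hR : Measurable R) (hR01 : ∀ ω, R ω = 0 ∨ R ω = 1)
    (π : 𝒱 → ℝ) (hπ : Measurable π)
    -- `π(V)` is a version of `E[R | σ(V)]`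
    (hπV : P[R | MeasurableSpace.comap V m𝒱] =ᵐ[P] fun ω => π (V ω))
    -- positivity
    (δ : ℝ) (hδ0 : 0 < δ)
    (hpos : ∀ᵐ ω ∂P, δ ≤ π (V ω) ∧ π (V ω) ≤ 1 - δ)
    -- ignorability: `R ⟂ (Y, L) | σ(V)`
    (hign : CondIndepFun (MeasurableSpace.comap V m𝒱) (hV.comap_le) R
      (fun ω => (Y ω, L ω)) P)
    (g : 𝒴 × 𝒱 → ℝ) (hg : Measurable g)
    (hgint : Integrable (fun ω => g (Y ω, V ω)) P) :
    P[fun ω => (R ω / π (V ω)) * g (Y ω, V ω)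
          - ((1 - R ω) / (1 - π (V ω)))
            * (P[fun ω' => g (Y ω', V ω')
                | MeasurableSpace.comap (fun ω' => (V ω', L ω')) inferInstance]) ω
        | MeasurableSpace.comap (fun ω' => (V ω', L ω')) inferInstance]
      =ᵐ[P] 0 := by
  set mW := MeasurableSpace.comap V m𝒱 ⊔ MeasurableSpace.comap (fun ω => (Y ω, L ω)) inferInstance
  have hmVL_le_mW : MeasurableSpace.comap (fun ω => (V ω, L ω)) inferInstance ≤ mW :=
    (comap_prodMk V L).trans_le <|
      sup_le_sup_left (comap_measurable fun ω => (Y ω, L ω)).snd.comap_le _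
  have hV_W : Measurable[mW] V := (comap_measurable V).mono le_sup_left le_rfl
  have hY_W : Measurable[mW] Y := ((comap_measurable _).mono le_sup_right le_rfl).fst
  have hR_W : P[R | mW] =ᵐ[P] fun ω => π (V ω) :=
    (condExp_sup_comap_ae_eq_of_condIndepFun hV.comap_le hR hR01 (hY.prodMk hL) hign).trans hπV
  exact condExp_ipw_sub_augmentation_ae_eq_zero hmVL_le_mW
    (sup_le hV.comap_le (hY.prodMk hL).comap_le) hR hR01
    (hπ.comp (comap_measurable _).fst).stronglyMeasurable hδ0 hpos hR_W
    (hg.comp (hY_W.prodMk hV_W)).stronglyMeasurable hgint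

/-- The parallel IPW estimating function
`U_g = (R/π(V)) ⬝ g(Y, V) − ((1 − R)/(1 − π(V))) ⬝ E[g(Y, V) | V, L]`
has conditional mean zero given the covariates: `E[U_g | σ(V, L)] = 0` a.s. -/
theorem ipw_estimating_function_conditional_mean_zero
    {Ω : Type*} {mΩ : MeasurableSpace Ω} [StandardBorelSpace Ω] [Nonempty Ω]
    {P : Measure Ω} [IsProbabilityMeasure P]
    {𝒱 𝓛 𝒴 : Type*} [m𝒱 : MeasurableSpace 𝒱] [m𝓛 : MeasurableSpace 𝓛]
    [m𝒴 : MeasurableSpace 𝒴]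
    (V : Ω → 𝒱) (L : Ω → 𝓛) (Y : Ω → 𝒴)
    (hV : Measurable V) (hL : Measurable L) (hY : Measurable Y)
    (R : Ω → ℝ) (hR : Measurable R) (hR01 : ∀ ω, R ω = 0 ∨ R ω = 1)
    (π : 𝒱 → ℝ) (hπ : Measurable π)
    -- `π(V)` is a version of `E[R | σ(V)]`
    (hπV : P[R | MeasurableSpace.comap V m𝒱] =ᵐ[P] fun ω => π (V ω))
    -- positivity
    (δ : ℝ) (hδ0 : 0 < δ) (hδhalf : δ < 1 / 2)
    (hpos : ∀ᵐ ω ∂P, δ ≤ π (V ω) ∧ π (V ω) ≤ 1 - δ)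
    -- ignorability: `R ⟂ (Y, L) | σ(V)`
    (hign : CondIndepFun (MeasurableSpace.comap V m𝒱) (hV.comap_le) R
      (fun ω => (Y ω, L ω)) P)
    (g : 𝒴 × 𝒱 → ℝ) (hg : Measurable g)
    (hgint : Integrable (fun ω => g (Y ω, V ω)) P) :
    P[fun ω => (R ω / π (V ω)) * g (Y ω, V ω)
          - ((1 - R ω) / (1 - π (V ω)))
            * (P[fun ω' => g (Y ω', V ω')
                | MeasurableSpace.comap (fun ω' => (V ω', L ω')) inferInstance]) ω
        | MeasurableSpace.comap (fun ω' => (V ω', L ω')) inferInstance]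
      =ᵐ[P] 0 :=
  ipw_estimating_function_conditional_mean_zero_general (mΩ := mΩ) (m𝒱 := m𝒱) (m𝓛 := m𝓛) (m𝒴 := m𝒴)
    V L Y hV hL hY R hR hR01 π hπ hπV δ hδ0 hpos hign g hg hgint
end

section
/- (Result 2, Case 2: correct covariate model, arbitrary data-source model.) For every integrable real-valued measurable function g of (Y, V) and every measurable function π̃ : 𝒱 → ℝ with δ ≤ π̃(V) ≤ 1 − δ P-a.s. (a possibly misspecified data-source model), E[(R/π̃(V)) · (g(Y, V) − E[g(Y, V) | V]) + ((1 − R)/(1 − π̃(V))) · (E[g(Y, V) | V] − E[g(Y, V) | V, L]) | σ(V)] = 0 P-a.s.; in particular the unconditional expectation of this doubly robust estimating function is zero. -/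
open MeasureTheory ProbabilityTheory

/-- Auxiliary: under conditional independence of the `{0,1}`-valued `R` and `A` given `σ(V)`,
the conditional expectation of `R` given the larger σ-algebra `σ(V, A)` is still `π(V)`. -/
lemma aux_condexp_R_big
    {Ω : Type*} {mΩ : MeasurableSpace Ω} [StandardBorelSpace Ω] [Nonempty Ω]
    {P : Measure Ω} [IsProbabilityMeasure P]
    {𝒱 𝒜 : Type*} [m𝒱 : MeasurableSpace 𝒱] [m𝒜 : MeasurableSpace 𝒜]
    (V : Ω → 𝒱) (A : Ω → 𝒜) (hV : Measurable V) (hA : Measurable A)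
    (R : Ω → ℝ) (hR : Measurable R) (hR01 : ∀ ω, R ω = 0 ∨ R ω = 1)
    (π : 𝒱 → ℝ) (hπ : Measurable π)
    (hπV : P[R | MeasurableSpace.comap V m𝒱] =ᵐ[P] fun ω => π (V ω))
    (hπbd : ∀ᵐ ω ∂P, ‖π (V ω)‖ ≤ 1)
    (hign : CondIndepFun (MeasurableSpace.comap V m𝒱) (hV.comap_le) R A P) :
    (fun ω => π (V ω)) =ᵐ[P]
      P[R | MeasurableSpace.comap (fun ω => (V ω, A ω)) inferInstance] := by
  classical
  have hm : MeasurableSpace.comap V m𝒱 ≤ mΩ := hV.comap_le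
  set W : Ω → 𝒱 × 𝒜 := fun ω => (V ω, A ω) with hW_def
  have hWmeas : Measurable W := hV.prodMk hA
  have hmBig : MeasurableSpace.comap W inferInstance ≤ mΩ := hWmeas.comap_le
  have hm_le_Big : MeasurableSpace.comap V m𝒱 ≤ MeasurableSpace.comap W inferInstance := by
    have h : MeasurableSpace.comap V m𝒱
        = MeasurableSpace.comap W (MeasurableSpace.comap Prod.fst m𝒱) := by
      rw [MeasurableSpace.comap_comp]; rfl
    rw [h]
    exact MeasurableSpace.comap_mono measurable_fst.comap_le
  have hVm : @Measurable Ω 𝒱 (MeasurableSpace.comap V m𝒱) m𝒱 V :=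
    measurable_iff_comap_le.mpr le_rfl
  have hπVsm : StronglyMeasurable[MeasurableSpace.comap V m𝒱] (fun ω => π (V ω)) :=
    (hπ.comp hVm).stronglyMeasurable
  have hRbd : ∀ ω, ‖R ω‖ ≤ 1 := by
    intro ω; rcases hR01 ω with h | h <;> simp [h]
  have hRint : Integrable R P :=
    (integrable_const (1 : ℝ)).mono' hR.aestronglyMeasurable (Filter.Eventually.of_forall hRbd)
  have hπVint : Integrable (fun ω => π (V ω)) P :=
    (integrable_const (1 : ℝ)).mono' (hπ.comp hV).aestronglyMeasurable hπbd
  -- `R` equals the indicator of `R ⁻¹' {1}`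
  have hRind : (Set.indicator (R ⁻¹' {1}) fun _ => (1 : ℝ)) = R := by
    funext ω
    rcases hR01 ω with h | h
    · have hmem : ω ∉ R ⁻¹' {1} := by simp [Set.mem_preimage, h]
      simp [Set.indicator_of_notMem hmem, h]
    · have hmem : ω ∈ R ⁻¹' {1} := by simp [Set.mem_preimage, h]
      simp [Set.indicator_of_mem hmem, h]
  -- the total integrals agree
  have htotal : ∫ ω, π (V ω) ∂P = ∫ ω, R ω ∂P := by
    rw [← integral_congr_ae hπV, integral_condExp hm]
  -- set-integral identity on rectangles and beyond
  have hsets : ∀ ⦃D : Set (𝒱 × 𝒜)⦄, MeasurableSet D →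
      ∫ ω in W ⁻¹' D, π (V ω) ∂P = ∫ ω in W ⁻¹' D, R ω ∂P := by
    refine MeasurableSpace.induction_on_inter generateFrom_prod.symm isPiSystem_prod ?_ ?_ ?_ ?_
    · simp
    · rintro t ⟨B, hB, C, hC, rfl⟩
      have hB' : MeasurableSet[MeasurableSpace.comap V m𝒱] (V ⁻¹' B) := ⟨B, hB, rfl⟩
      have hBm : MeasurableSet (V ⁻¹' B) := hV hB
      have hCm : MeasurableSet (A ⁻¹' C) := hA hC
      have hpre : W ⁻¹' (B ×ˢ C) = V ⁻¹' B ∩ A ⁻¹' C := by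
        ext ω; simp [hW_def, Set.mem_prod]
      -- indicator functions
      have hindC_int : Integrable ((A ⁻¹' C).indicator fun _ => (1 : ℝ)) P :=
        (integrable_const (1 : ℝ)).indicator hCm
      have hindRC_int :
          Integrable ((R ⁻¹' {1} ∩ A ⁻¹' C).indicator fun _ => (1 : ℝ)) P :=
        (integrable_const (1 : ℝ)).indicator ((hR (measurableSet_singleton 1)).inter hCm)
      -- conditional independence applied to `{1}` and `C`
      have hii := (condIndepFun_iff_condExp_inter_preimage_eq_mul
          (m' := MeasurableSpace.comap V m𝒱) (hm' := hV.comap_le) hR hA).mp hign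
          {1} C (measurableSet_singleton 1) hC
      -- `P⟦R⁻¹{1} | m⟧ = P[R|m] =ᵐ π(V)`
      have hcondR1 : (P⟦R ⁻¹' {1} | MeasurableSpace.comap V m𝒱⟧) =ᵐ[P]
          fun ω => π (V ω) := by
        have heq : (P⟦R ⁻¹' {1} | MeasurableSpace.comap V m𝒱⟧)
            = P[R | MeasurableSpace.comap V m𝒱] := by rw [hRind]
        rw [heq]; exact hπV
      -- right-hand side computation
      have hRhs : ∫ ω in W ⁻¹' (B ×ˢ C), R ω ∂P
          = ∫ ω in V ⁻¹' B,
              π (V ω) * (P⟦A ⁻¹' C | MeasurableSpace.comap V m𝒱⟧) ω ∂P := by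
        have e1 : ∫ ω in W ⁻¹' (B ×ˢ C), R ω ∂P
            = ∫ ω in V ⁻¹' B, ((R ⁻¹' {1} ∩ A ⁻¹' C).indicator fun _ => (1 : ℝ)) ω ∂P := by
          rw [hpre]
          conv_lhs => rw [← hRind]
          rw [setIntegral_indicator (hR (measurableSet_singleton 1)),
            setIntegral_indicator ((hR (measurableSet_singleton 1)).inter hCm)]
          have hsetEq : V ⁻¹' B ∩ A ⁻¹' C ∩ R ⁻¹' {1}
              = V ⁻¹' B ∩ (R ⁻¹' {1} ∩ A ⁻¹' C) := by
            ext ω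
            simp only [Set.mem_inter_iff, Set.mem_preimage]
            tauto
          rw [hsetEq]
        rw [e1, ← setIntegral_condExp hm hindRC_int hB']
        refine integral_congr_ae (ae_restrict_of_ae ?_)
        filter_upwards [hii, hcondR1] with ω h1 h2
        rw [h1, h2]
      -- left-hand side computation
      have hq_int : Integrable
          (fun ω => π (V ω) * ((A ⁻¹' C).indicator (fun _ => (1 : ℝ))) ω) P :=
        hindC_int.bdd_mul (hπ.comp hV).aestronglyMeasurable hπbd
      have hLhs : ∫ ω in W ⁻¹' (B ×ˢ C), π (V ω) ∂P
          = ∫ ω in V ⁻¹' B,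
              π (V ω) * (P⟦A ⁻¹' C | MeasurableSpace.comap V m𝒱⟧) ω ∂P := by
        have e1 : ∫ ω in W ⁻¹' (B ×ˢ C), π (V ω) ∂P
            = ∫ ω in V ⁻¹' B,
                (fun ω => π (V ω) * ((A ⁻¹' C).indicator (fun _ => (1 : ℝ))) ω) ω ∂P := by
          rw [hpre]
          have e2 : (fun ω => π (V ω) * ((A ⁻¹' C).indicator (fun _ => (1 : ℝ))) ω)
              = (A ⁻¹' C).indicator (fun ω => π (V ω)) := by
            funext ω
            by_cases h : ω ∈ A ⁻¹' C <;> simp [h]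
          rw [e2, setIntegral_indicator hCm]
        rw [e1, ← setIntegral_condExp hm hq_int hB']
        refine integral_congr_ae (ae_restrict_of_ae ?_)
        have hmul := condExp_mul_of_stronglyMeasurable_left (μ := P)
          (m := MeasurableSpace.comap V m𝒱) hπVsm
          (show Integrable ((fun ω => π (V ω)) * ((A ⁻¹' C).indicator fun _ => (1 : ℝ))) P
            from hq_int) hindC_int
        filter_upwards [hmul] with ω hω
        exact hω
      rw [hLhs, hRhs]
    · intro t htm hind
      have h1 := integral_add_compl (hWmeas htm) hπVint
      have h2 := integral_add_compl (hWmeas htm) hRint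
      have hc : W ⁻¹' tᶜ = (W ⁻¹' t)ᶜ := rfl
      rw [hc]
      linarith
    · intro f hdisj hfm hind
      have hpre : W ⁻¹' (⋃ i, f i) = ⋃ i, W ⁻¹' (f i) := Set.preimage_iUnion
      rw [hpre,
        integral_iUnion (fun i => hWmeas (hfm i))
          (fun i j hij => (hdisj hij).preimage W) hπVint.integrableOn,
        integral_iUnion (fun i => hWmeas (hfm i))
          (fun i j hij => (hdisj hij).preimage W) hRint.integrableOn]
      exact tsum_congr hind
  -- conclude via uniqueness of conditional expectation
  refine ae_eq_condExp_of_forall_setIntegral_eq hmBig hRint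
    (fun s _ _ => hπVint.integrableOn) ?_
    ((hπVsm.mono hm_le_Big).aestronglyMeasurable)
  rintro s hs -
  obtain ⟨D, hD, rfl⟩ := hs
  exact hsets hD

/-- **Result 2, Case 2.** With a possibly misspecified data-source model `π̃`
(bounded between `δ` and `1 − δ`), the doubly robust estimating function
`(R/π̃(V)) (g(Y,V) − E[g(Y,V)|V]) + ((1 − R)/(1 − π̃(V))) (E[g(Y,V)|V] − E[g(Y,V)|V,L])`
has conditional mean zero given `σ(V)`; in particular its unconditional expectation is zero. -/
theorem dr_estimating_function_unbiased_correct_covariate_model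
    {Ω : Type*} {mΩ : MeasurableSpace Ω} [StandardBorelSpace Ω] [Nonempty Ω]
    {P : Measure Ω} [IsProbabilityMeasure P]
    {𝒱 𝓛 𝒴 : Type*} [m𝒱 : MeasurableSpace 𝒱] [m𝓛 : MeasurableSpace 𝓛]
    [m𝒴 : MeasurableSpace 𝒴]
    (V : Ω → 𝒱) (L : Ω → 𝓛) (Y : Ω → 𝒴)
    (hV : Measurable V) (hL : Measurable L) (hY : Measurable Y)
    (R : Ω → ℝ) (hR : Measurable R) (hR01 : ∀ ω, R ω = 0 ∨ R ω = 1)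
    (π : 𝒱 → ℝ) (hπ : Measurable π)
    -- `π(V)` is a version of `E[R | σ(V)]`
    (hπV : P[R | MeasurableSpace.comap V m𝒱] =ᵐ[P] fun ω => π (V ω))
    -- positivity
    (δ : ℝ) (hδ0 : 0 < δ) (hδhalf : δ < 1 / 2)
    (hpos : ∀ᵐ ω ∂P, δ ≤ π (V ω) ∧ π (V ω) ≤ 1 - δ)
    -- ignorability: `R ⟂ (Y, L) | σ(V)`
    (hign : CondIndepFun (MeasurableSpace.comap V m𝒱) (hV.comap_le) R
      (fun ω => (Y ω, L ω)) P)
    (g : 𝒴 × 𝒱 → ℝ) (hg : Measurable g)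
    (hgint : Integrable (fun ω => g (Y ω, V ω)) P)
    -- possibly misspecified data-source model `π̃`
    (πt : 𝒱 → ℝ) (hπt : Measurable πt)
    (hπtpos : ∀ᵐ ω ∂P, δ ≤ πt (V ω) ∧ πt (V ω) ≤ 1 - δ) :
    (P[fun ω => (R ω / πt (V ω))
            * (g (Y ω, V ω) - (P[fun ω' => g (Y ω', V ω') | MeasurableSpace.comap V m𝒱]) ω)
          + ((1 - R ω) / (1 - πt (V ω)))
            * ((P[fun ω' => g (Y ω', V ω') | MeasurableSpace.comap V m𝒱]) ω
              - (P[fun ω' => g (Y ω', V ω')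
                  | MeasurableSpace.comap (fun ω' => (V ω', L ω')) inferInstance]) ω)
        | MeasurableSpace.comap V m𝒱] =ᵐ[P] 0) ∧
      ∫ ω, ((R ω / πt (V ω))
            * (g (Y ω, V ω) - (P[fun ω' => g (Y ω', V ω') | MeasurableSpace.comap V m𝒱]) ω)
          + ((1 - R ω) / (1 - πt (V ω)))
            * ((P[fun ω' => g (Y ω', V ω') | MeasurableSpace.comap V m𝒱]) ω
              - (P[fun ω' => g (Y ω', V ω')
                  | MeasurableSpace.comap (fun ω' => (V ω', L ω')) inferInstance]) ω)) ∂P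
        = 0 := by
  classical
  have hYL : Measurable fun ω => (Y ω, L ω) := hY.prodMk hL
  have hVL : Measurable fun ω' => (V ω', L ω') := hV.prodMk hL
  have hm : MeasurableSpace.comap V m𝒱 ≤ mΩ := hV.comap_le
  have hmVL : MeasurableSpace.comap (fun ω' => (V ω', L ω')) inferInstance ≤ mΩ :=
    hVL.comap_le
  set W : Ω → 𝒱 × (𝒴 × 𝓛) := fun ω => (V ω, (Y ω, L ω)) with hW_def
  have hWmeas : Measurable W := hV.prodMk hYL
  have hmBig : MeasurableSpace.comap W inferInstance ≤ mΩ := hWmeas.comap_le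
  have hm_le_Big : MeasurableSpace.comap V m𝒱 ≤ MeasurableSpace.comap W inferInstance := by
    have h : MeasurableSpace.comap V m𝒱
        = MeasurableSpace.comap W (MeasurableSpace.comap Prod.fst m𝒱) := by
      rw [MeasurableSpace.comap_comp]; rfl
    rw [h]
    exact MeasurableSpace.comap_mono measurable_fst.comap_le
  have hmVL_le_Big : MeasurableSpace.comap (fun ω' => (V ω', L ω')) inferInstance
      ≤ MeasurableSpace.comap W inferInstance := by
    have h : MeasurableSpace.comap (fun ω' => (V ω', L ω'))
          (inferInstance : MeasurableSpace (𝒱 × 𝓛))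
        = MeasurableSpace.comap W
          (MeasurableSpace.comap (fun p : 𝒱 × 𝒴 × 𝓛 => (p.1, p.2.2)) inferInstance) := by
      rw [MeasurableSpace.comap_comp]; rfl
    rw [h]
    exact MeasurableSpace.comap_mono (measurable_fst.prodMk measurable_snd.snd).comap_le
  have hm_le_VL : MeasurableSpace.comap V m𝒱
      ≤ MeasurableSpace.comap (fun ω' => (V ω', L ω')) inferInstance := by
    have h : MeasurableSpace.comap V m𝒱
        = MeasurableSpace.comap (fun ω' => (V ω', L ω'))
          (MeasurableSpace.comap Prod.fst m𝒱) := by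
      rw [MeasurableSpace.comap_comp]; rfl
    rw [h]
    exact MeasurableSpace.comap_mono measurable_fst.comap_le
  have hVm : @Measurable Ω 𝒱 (MeasurableSpace.comap V m𝒱) m𝒱 V :=
    measurable_iff_comap_le.mpr le_rfl
  have hWm : @Measurable Ω (𝒱 × 𝒴 × 𝓛) (MeasurableSpace.comap W inferInstance) _ W :=
    measurable_iff_comap_le.mpr le_rfl
  have hπVsm : StronglyMeasurable[MeasurableSpace.comap V m𝒱] (fun ω => π (V ω)) :=
    (hπ.comp hVm).stronglyMeasurable
  have hRbd : ∀ ω, ‖R ω‖ ≤ 1 := by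
    intro ω; rcases hR01 ω with h | h <;> simp [h]
  have hRint : Integrable R P :=
    (integrable_const (1 : ℝ)).mono' hR.aestronglyMeasurable (Filter.Eventually.of_forall hRbd)
  have hπbd : ∀ᵐ ω ∂P, ‖π (V ω)‖ ≤ 1 := by
    filter_upwards [hpos] with ω hω
    rw [Real.norm_eq_abs, abs_le]
    constructor <;> nlinarith [hω.1, hω.2]
  -- conditional expectation of `R` given the big σ-algebra is still `π(V)`
  have hRBig : (fun ω => π (V ω)) =ᵐ[P] P[R | MeasurableSpace.comap W inferInstance] :=
    aux_condexp_R_big V (fun ω => (Y ω, L ω)) hV hYL R hR hR01 π hπ hπV hπbd hign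
  -- the conditional expectations of g
  set μ1 := P[fun ω' => g (Y ω', V ω') | MeasurableSpace.comap V m𝒱] with hμ1_def
  set μ2 := P[fun ω' => g (Y ω', V ω')
    | MeasurableSpace.comap (fun ω' => (V ω', L ω')) inferInstance] with hμ2_def
  have hμ1sm : StronglyMeasurable[MeasurableSpace.comap V m𝒱] μ1 :=
    hμ1_def ▸ stronglyMeasurable_condExp
  have hμ2sm : StronglyMeasurable[MeasurableSpace.comap (fun ω' => (V ω', L ω'))
      inferInstance] μ2 := hμ2_def ▸ stronglyMeasurable_condExp
  have hμ1int : Integrable μ1 P := hμ1_def ▸ integrable_condExp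
  have hμ2int : Integrable μ2 P := hμ2_def ▸ integrable_condExp
  have hG_Big : StronglyMeasurable[MeasurableSpace.comap W inferInstance]
      (fun ω => g (Y ω, V ω)) := by
    have h1 : Measurable (fun p : 𝒱 × 𝒴 × 𝓛 => g (p.2.1, p.1)) :=
      hg.comp (measurable_snd.fst.prodMk measurable_fst)
    exact (h1.comp hWm).stronglyMeasurable
  -- pull-out key lemma
  have key : ∀ h : Ω → ℝ, Integrable h P →
      StronglyMeasurable[MeasurableSpace.comap W inferInstance] h →
      P[fun ω => R ω * h ω | MeasurableSpace.comap V m𝒱]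
        =ᵐ[P] fun ω => π (V ω) * (P[h | MeasurableSpace.comap V m𝒱]) ω := by
    intro h hint hsm
    have hRh_int : Integrable (fun ω => R ω * h ω) P :=
      hint.bdd_mul hR.aestronglyMeasurable (Filter.Eventually.of_forall hRbd)
    have e1 : P[fun ω => R ω * h ω | MeasurableSpace.comap V m𝒱]
        =ᵐ[P] P[P[fun ω => R ω * h ω | MeasurableSpace.comap W inferInstance]
          | MeasurableSpace.comap V m𝒱] :=
      (condExp_condExp_of_le hm_le_Big hmBig).symm
    have e2 : P[fun ω => R ω * h ω | MeasurableSpace.comap W inferInstance]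
        =ᵐ[P] fun ω => h ω * (P[R | MeasurableSpace.comap W inferInstance]) ω := by
      have hcomm : (fun ω => R ω * h ω) = h * R := by
        funext ω; simp [mul_comm]
      rw [hcomm]
      exact condExp_mul_of_stronglyMeasurable_left hsm (by rw [← hcomm]; exact hRh_int) hRint
    have e3 : (fun ω => h ω * (P[R | MeasurableSpace.comap W inferInstance]) ω)
        =ᵐ[P] fun ω => h ω * π (V ω) := by
      filter_upwards [hRBig] with ω hω
      rw [← hω]
    have hπh_int : Integrable (fun ω => π (V ω) * h ω) P :=
      hint.bdd_mul (hπ.comp hV).aestronglyMeasurable hπbd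
    have e4 : P[fun ω => h ω * π (V ω) | MeasurableSpace.comap V m𝒱]
        =ᵐ[P] fun ω => π (V ω) * (P[h | MeasurableSpace.comap V m𝒱]) ω := by
      have hcomm : (fun ω => h ω * π (V ω)) = (fun ω => π (V ω)) * h := by
        funext ω; simp [mul_comm]
      rw [hcomm]
      exact condExp_mul_of_stronglyMeasurable_left hπVsm
        (by rw [← hcomm]; simpa [mul_comm] using hπh_int) hint
    exact e1.trans (((condExp_congr_ae (e2.trans e3)).trans e4))
  -- the two centered functions
  set h1 : Ω → ℝ := fun ω => g (Y ω, V ω) - μ1 ω with hh1_def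
  set h2 : Ω → ℝ := fun ω => μ1 ω - μ2 ω with hh2_def
  have hh1int : Integrable h1 P := hgint.sub hμ1int
  have hh2int : Integrable h2 P := hμ1int.sub hμ2int
  have hh1big : StronglyMeasurable[MeasurableSpace.comap W inferInstance] h1 :=
    hG_Big.sub (hμ1sm.mono hm_le_Big)
  have hh2big : StronglyMeasurable[MeasurableSpace.comap W inferInstance] h2 :=
    (hμ1sm.mono hm_le_Big).sub (hμ2sm.mono hmVL_le_Big)
  -- conditional expectations of the centered functions vanish
  have hfix : P[μ1 | MeasurableSpace.comap V m𝒱] = μ1 :=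
    condExp_of_stronglyMeasurable hm hμ1sm hμ1int
  have hE1 : P[h1 | MeasurableSpace.comap V m𝒱] =ᵐ[P] 0 := by
    have hs := condExp_sub (m := MeasurableSpace.comap V m𝒱) (μ := P) hgint hμ1int
    rw [hh1_def]
    refine hs.trans ?_
    rw [← hμ1_def, hfix]
    filter_upwards with ω
    simp
  have htow : P[μ2 | MeasurableSpace.comap V m𝒱] =ᵐ[P] μ1 := by
    rw [hμ1_def, hμ2_def]
    exact condExp_condExp_of_le hm_le_VL hmVL
  have hE2 : P[h2 | MeasurableSpace.comap V m𝒱] =ᵐ[P] 0 := by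
    have hs := condExp_sub (m := MeasurableSpace.comap V m𝒱) (μ := P) hμ1int hμ2int
    rw [hh2_def]
    refine hs.trans ?_
    rw [hfix]
    filter_upwards [htow] with ω hω
    simp [hω]
  -- conditional expectations of R times the centered functions vanish
  have hu1 : P[fun ω => R ω * h1 ω | MeasurableSpace.comap V m𝒱] =ᵐ[P] 0 := by
    filter_upwards [key h1 hh1int hh1big, hE1] with ω hω h0
    rw [hω]
    simp only [Pi.zero_apply] at h0
    simp [h0]
  have hRh2int : Integrable (fun ω => R ω * h2 ω) P :=
    hh2int.bdd_mul hR.aestronglyMeasurable (Filter.Eventually.of_forall hRbd)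
  have hu2 : P[fun ω => (1 - R ω) * h2 ω | MeasurableSpace.comap V m𝒱] =ᵐ[P] 0 := by
    have heq : (fun ω => (1 - R ω) * h2 ω) = fun ω => h2 ω - R ω * h2 ω := by
      funext ω; ring
    rw [heq]
    have hs := condExp_sub (m := MeasurableSpace.comap V m𝒱) (μ := P) hh2int hRh2int
    filter_upwards [hs, hE2, key h2 hh2int hh2big] with ω hω h0 hk
    simp only [Pi.zero_apply] at h0
    simp only [Pi.sub_apply, hk, h0] at hω
    exact hω.trans (by simp)
  -- the multipliers
  have hπtVm : @Measurable Ω ℝ (MeasurableSpace.comap V m𝒱) _ (fun ω => πt (V ω)) :=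
    hπt.comp hVm
  have hc1sm : StronglyMeasurable[MeasurableSpace.comap V m𝒱] (fun ω => (πt (V ω))⁻¹) :=
    hπtVm.inv.stronglyMeasurable
  have hc2sm : StronglyMeasurable[MeasurableSpace.comap V m𝒱]
      (fun ω => (1 - πt (V ω))⁻¹) :=
    (measurable_const.sub hπtVm).inv.stronglyMeasurable
  have hc1bd : ∀ᵐ ω ∂P, ‖(πt (V ω))⁻¹‖ ≤ δ⁻¹ := by
    filter_upwards [hπtpos] with ω hω
    rw [Real.norm_eq_abs, abs_of_nonneg (inv_nonneg.2 (le_trans hδ0.le hω.1))]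
    exact inv_anti₀ hδ0 hω.1
  have hc2bd : ∀ᵐ ω ∂P, ‖(1 - πt (V ω))⁻¹‖ ≤ δ⁻¹ := by
    filter_upwards [hπtpos] with ω hω
    have h : δ ≤ 1 - πt (V ω) := by linarith [hω.2]
    rw [Real.norm_eq_abs, abs_of_nonneg (inv_nonneg.2 (le_trans hδ0.le h))]
    exact inv_anti₀ hδ0 h
  -- integrability of the pieces
  have hu1int : Integrable (fun ω => R ω * h1 ω) P :=
    hh1int.bdd_mul hR.aestronglyMeasurable (Filter.Eventually.of_forall hRbd)
  have hu2int : Integrable (fun ω => (1 - R ω) * h2 ω) P := by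
    refine hh2int.bdd_mul (c := 1) (aestronglyMeasurable_const.sub hR.aestronglyMeasurable)
      (Filter.Eventually.of_forall fun ω => ?_)
    rcases hR01 ω with h | h <;> simp [h]
  have hf1int : Integrable (fun ω => (πt (V ω))⁻¹ * (R ω * h1 ω)) P :=
    hu1int.bdd_mul (hπt.comp hV).inv.aestronglyMeasurable hc1bd
  have hf2int : Integrable (fun ω => (1 - πt (V ω))⁻¹ * ((1 - R ω) * h2 ω)) P :=
    hu2int.bdd_mul (measurable_const.sub (hπt.comp hV)).inv.aestronglyMeasurable hc2bd
  -- rewrite the estimating function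
  have hFeq : (fun ω => (R ω / πt (V ω)) * (g (Y ω, V ω) - μ1 ω)
        + ((1 - R ω) / (1 - πt (V ω))) * (μ1 ω - μ2 ω))
      = fun ω => (πt (V ω))⁻¹ * (R ω * h1 ω)
        + (1 - πt (V ω))⁻¹ * ((1 - R ω) * h2 ω) := by
    funext ω
    rw [hh1_def, hh2_def]
    ring
  -- the conditional expectation vanishes
  have hcond : P[fun ω => (R ω / πt (V ω)) * (g (Y ω, V ω) - μ1 ω)
      + ((1 - R ω) / (1 - πt (V ω))) * (μ1 ω - μ2 ω)
      | MeasurableSpace.comap V m𝒱] =ᵐ[P] 0 := by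
    rw [hFeq]
    have hadd : P[fun ω => (πt (V ω))⁻¹ * (R ω * h1 ω)
          + (1 - πt (V ω))⁻¹ * ((1 - R ω) * h2 ω) | MeasurableSpace.comap V m𝒱]
        =ᵐ[P] P[fun ω => (πt (V ω))⁻¹ * (R ω * h1 ω) | MeasurableSpace.comap V m𝒱]
          + P[fun ω => (1 - πt (V ω))⁻¹ * ((1 - R ω) * h2 ω)
            | MeasurableSpace.comap V m𝒱] :=
      condExp_add hf1int hf2int _
    have hp1 : P[fun ω => (πt (V ω))⁻¹ * (R ω * h1 ω) | MeasurableSpace.comap V m𝒱]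
        =ᵐ[P] fun ω => (πt (V ω))⁻¹
          * (P[fun ω' => R ω' * h1 ω' | MeasurableSpace.comap V m𝒱]) ω :=
      condExp_mul_of_stronglyMeasurable_left hc1sm hf1int hu1int
    have hp2 : P[fun ω => (1 - πt (V ω))⁻¹ * ((1 - R ω) * h2 ω)
          | MeasurableSpace.comap V m𝒱]
        =ᵐ[P] fun ω => (1 - πt (V ω))⁻¹
          * (P[fun ω' => (1 - R ω') * h2 ω' | MeasurableSpace.comap V m𝒱]) ω :=
      condExp_mul_of_stronglyMeasurable_left hc2sm hf2int hu2int
    filter_upwards [hadd, hp1, hp2, hu1, hu2] with ω ha hb hc hd he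
    simp only [Pi.zero_apply] at hd he
    rw [ha]
    simp only [Pi.add_apply, hb, hc, hd, he]
    simp
  refine ⟨hcond, ?_⟩
  calc ∫ ω, ((R ω / πt (V ω)) * (g (Y ω, V ω) - μ1 ω)
        + ((1 - R ω) / (1 - πt (V ω))) * (μ1 ω - μ2 ω)) ∂P
      = ∫ ω, (P[fun ω' => (R ω' / πt (V ω')) * (g (Y ω', V ω') - μ1 ω')
        + ((1 - R ω') / (1 - πt (V ω'))) * (μ1 ω' - μ2 ω')
        | MeasurableSpace.comap V m𝒱]) ω ∂P :=
        (integral_condExp hm).symm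
    _ = ∫ ω, (0 : Ω → ℝ) ω ∂P := integral_congr_ae hcond
    _ = 0 := by simp
end

section
/- (Positive semidefiniteness in the proof of Lemma S1.) Let X and W be square-integrable ℝᵖ-valued random vectors such that E[XWᵀ] and E[WWᵀ] are invertible p×p matrices. Then the matrix E[XWᵀ]⁻¹ · E[XXᵀ] · E[WXᵀ]⁻¹ − E[WWᵀ]⁻¹ is positive semidefinite. -/
/-!
Take `v ∈ ℝᵖ`, `a = E[XWᵀ]⁻ᵀ v` and `b = E[WWᵀ]⁻¹ v`. Then `E[(aᵀX)²] = vᵀ E[XWᵀ]⁻¹ E[XXᵀ] E[WXᵀ]⁻¹ v`,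
while `E[(aᵀX)(bᵀW)] = E[(bᵀW)²] = vᵀ E[WWᵀ]⁻¹ v`, so `0 ≤ E[(aᵀX − bᵀW)²]` is exactly the
claimed inequality for the quadratic form at `v`.
-/

open MeasureTheory Matrix

section LinearAlgebra

variable {n : Type*} [Fintype n]

theorem dotProduct_mul_mul_mulVec (M N K : Matrix n n ℝ) (u v : n → ℝ) :
    u ⬝ᵥ (M * N * K) *ᵥ v = (Mᵀ *ᵥ u) ⬝ᵥ N *ᵥ (K *ᵥ v) := by
  symm
  rw [mulVec_transpose, mulVec_mulVec, dotProduct_mulVec, vecMul_vecMul, dotProduct_mulVec,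
    Matrix.mul_assoc]

theorem posSemidef_inv_mul_mul_inv_transpose_sub_inv [DecidableEq n] {A B C : Matrix n n ℝ}
    (hA : Aᵀ = A) (hC : Cᵀ = C) (hB : IsUnit B.det) (hCdet : IsUnit C.det)
    (h : ∀ a b, 2 * (a ⬝ᵥ B *ᵥ b) ≤ a ⬝ᵥ A *ᵥ a + b ⬝ᵥ C *ᵥ b) :
    (B⁻¹ * A * B⁻¹ᵀ - C⁻¹).PosSemidef := by
  have hCinv : C⁻¹ᵀ = C⁻¹ := by rw [transpose_nonsing_inv, hC]
  refine posSemidef_iff_dotProduct_mulVec.2 ⟨?_, fun v => ?_⟩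
  · rw [IsHermitian, conjTranspose_eq_transpose_of_trivial, transpose_sub, hCinv,
      transpose_mul, transpose_mul, transpose_transpose, hA, Matrix.mul_assoc]
  · have hAv := dotProduct_mul_mul_mulVec B⁻¹ A B⁻¹ᵀ v v
    have hBv : (B⁻¹ᵀ *ᵥ v) ⬝ᵥ B *ᵥ (C⁻¹ *ᵥ v) = v ⬝ᵥ C⁻¹ *ᵥ v := by
      rw [← dotProduct_mul_mul_mulVec, nonsing_inv_mul _ hB, Matrix.one_mul]
    have hCv : (C⁻¹ᵀ *ᵥ v) ⬝ᵥ C *ᵥ (C⁻¹ *ᵥ v) = v ⬝ᵥ C⁻¹ *ᵥ v := by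
      rw [← dotProduct_mul_mul_mulVec, nonsing_inv_mul _ hCdet, Matrix.one_mul]
    rw [hCinv] at hCv
    have := h (B⁻¹ᵀ *ᵥ v) (C⁻¹ *ᵥ v)
    rw [← hAv, hBv, hCv] at this
    simp only [star_trivial, sub_mulVec, dotProduct_sub]
    linarith

end LinearAlgebra

section SecondMoments

variable {Ω ι κ : Type*} [MeasurableSpace Ω] {P : Measure Ω} [Fintype ι] [Fintype κ]

/-- The matrix `E[X Wᵀ]`. -/
noncomputable def crossMoment (P : Measure Ω) (X : Ω → ι → ℝ) (W : Ω → κ → ℝ) : Matrix ι κ ℝ :=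
  of fun i j => ∫ ω, X ω i * W ω j ∂P

omit [Fintype ι] [Fintype κ] in
theorem crossMoment_transpose (X : Ω → ι → ℝ) (W : Ω → κ → ℝ) :
    (crossMoment P X W)ᵀ = crossMoment P W X := by
  ext i j
  simp only [crossMoment, transpose_apply, of_apply, mul_comm]

theorem memLp_dotProduct {X : Ω → ι → ℝ} (hX : ∀ i, MemLp (fun ω => X ω i) 2 P)
    (a : ι → ℝ) : MemLp (fun ω => a ⬝ᵥ X ω) 2 P :=
  memLp_finsetSum _ fun i _ => (hX i).const_mul (a i)

theorem integral_dotProduct_mul_dotProduct {X : Ω → ι → ℝ} {W : Ω → κ → ℝ}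
    (hX : ∀ i, MemLp (fun ω => X ω i) 2 P) (hW : ∀ j, MemLp (fun ω => W ω j) 2 P)
    (a : ι → ℝ) (b : κ → ℝ) :
    ∫ ω, (a ⬝ᵥ X ω) * (b ⬝ᵥ W ω) ∂P = a ⬝ᵥ crossMoment P X W *ᵥ b := by
  have hXW i j : Integrable (fun ω => X ω i * W ω j * b j) P :=
    ((hX i).integrable_mul (hW j)).mul_const (b j)
  calc ∫ ω, (a ⬝ᵥ X ω) * (b ⬝ᵥ W ω) ∂P
      = ∫ ω, ∑ i, ∑ j, a i * (X ω i * W ω j * b j) ∂P := by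
        simp only [dotProduct, Finset.sum_mul_sum]
        congr with ω
        exact Finset.sum_congr rfl fun i _ => Finset.sum_congr rfl fun j _ => by ring
    _ = ∑ i, a i * ∑ j, ∫ ω, X ω i * W ω j * b j ∂P := by
        rw [integral_finsetSum _ fun i _ => integrable_finsetSum _ fun j _ => (hXW i j).const_mul _]
        refine Finset.sum_congr rfl fun i _ => ?_
        rw [integral_finsetSum _ fun j _ => (hXW i j).const_mul _, Finset.mul_sum]
        simp only [integral_const_mul]
    _ = a ⬝ᵥ crossMoment P X W *ᵥ b := by
        simp only [dotProduct, mulVec, crossMoment, of_apply, integral_mul_const]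

theorem two_mul_integral_mul_le {S T : Ω → ℝ} (hS : MemLp S 2 P) (hT : MemLp T 2 P) :
    2 * ∫ ω, S ω * T ω ∂P ≤ ∫ ω, S ω * S ω ∂P + ∫ ω, T ω * T ω ∂P := by
  have hSS : Integrable (fun ω => S ω * S ω) P := hS.integrable_mul hS
  have hTT : Integrable (fun ω => T ω * T ω) P := hT.integrable_mul hT
  have hST : Integrable (fun ω => S ω * T ω) P := hS.integrable_mul hT
  rw [← integral_const_mul, ← integral_add hSS hTT]
  exact integral_mono (hST.const_mul 2) (hSS.add hTT) fun ω => by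
    nlinarith [sq_nonneg (S ω - T ω)]

end SecondMoments

theorem lemma_S1_posSemidef_general
    {Ω : Type*} [MeasurableSpace Ω] {P : Measure Ω}
    (p : ℕ)
    (X W : Ω → Fin p → ℝ)
    (hX2 : ∀ i, MemLp (fun ω => X ω i) 2 P)
    (hW2 : ∀ i, MemLp (fun ω => W ω i) 2 P)
    (EXW EXX EWX EWW : Matrix (Fin p) (Fin p) ℝ)
    (hEXW : EXW = Matrix.of fun i j => ∫ ω, X ω i * W ω j ∂P)
    (hEXX : EXX = Matrix.of fun i j => ∫ ω, X ω i * X ω j ∂P)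
    (hEWX : EWX = Matrix.of fun i j => ∫ ω, W ω i * X ω j ∂P)
    (hEWW : EWW = Matrix.of fun i j => ∫ ω, W ω i * W ω j ∂P)
    (hinvXW : IsUnit EXW.det) (hinvWW : IsUnit EWW.det) :
    (EXW⁻¹ * EXX * EWX⁻¹ - EWW⁻¹).PosSemidef := by
  change EXW = crossMoment P X W at hEXW
  change EXX = crossMoment P X X at hEXX
  change EWX = crossMoment P W X at hEWX
  change EWW = crossMoment P W W at hEWW
  subst hEXW hEXX hEWX hEWW
  rw [← crossMoment_transpose X W, ← transpose_nonsing_inv]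
  refine posSemidef_inv_mul_mul_inv_transpose_sub_inv (crossMoment_transpose X X)
    (crossMoment_transpose W W) hinvXW hinvWW fun a b => ?_
  rw [← integral_dotProduct_mul_dotProduct hX2 hX2, ← integral_dotProduct_mul_dotProduct hX2 hW2,
    ← integral_dotProduct_mul_dotProduct hW2 hW2]
  exact two_mul_integral_mul_le (memLp_dotProduct hX2 a) (memLp_dotProduct hW2 b)

/-- Positive semidefiniteness in the proof of Lemma S1. For
square-integrable random vectors `X, W` with `E[XWᵀ]` and `E[WWᵀ]` invertible, the matrix
`E[XWᵀ]⁻¹ E[XXᵀ] E[WXᵀ]⁻¹ − E[WWᵀ]⁻¹` is positive semidefinite. -/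
theorem lemma_S1_posSemidef
    {Ω : Type*} [MeasurableSpace Ω] {P : Measure Ω} [IsProbabilityMeasure P]
    (p : ℕ)
    (X W : Ω → Fin p → ℝ) (hX : Measurable X) (hW : Measurable W)
    (hX2 : ∀ i, MemLp (fun ω => X ω i) 2 P)
    (hW2 : ∀ i, MemLp (fun ω => W ω i) 2 P)
    (EXW EXX EWX EWW : Matrix (Fin p) (Fin p) ℝ)
    (hEXW : EXW = Matrix.of fun i j => ∫ ω, X ω i * W ω j ∂P)
    (hEXX : EXX = Matrix.of fun i j => ∫ ω, X ω i * X ω j ∂P)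
    (hEWX : EWX = Matrix.of fun i j => ∫ ω, W ω i * X ω j ∂P)
    (hEWW : EWW = Matrix.of fun i j => ∫ ω, W ω i * W ω j ∂P)
    (hinvXW : IsUnit EXW.det) (hinvWW : IsUnit EWW.det) :
    (EXW⁻¹ * EXX * EWX⁻¹ - EWW⁻¹).PosSemidef :=
  lemma_S1_posSemidef_general p X W hX2 hW2 EXW EXX EWX EWW hEXW hEXX hEWX hEWW hinvXW hinvWW
end

section
/- (Characterization of the optimal index function, forward direction of Result 3's proof.) Suppose the efficiency setup holds and h̃ is an admissible index function such that for every admissible index function h, −E[h(V) Dᵀ] = E[M² h(V) h̃(V)ᵀ] as p×p matrices. Then E[M² h̃(V) + D | σ(V)] = 0 P-a.s. (componentwise); consequently, if E[M² | σ(V)] > 0 P-a.s., then h̃(V) = −E[D | σ(V)] · (E[M² | σ(V)])⁻¹ P-a.s. -/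
open MeasureTheory

/-!
Testing the first-order condition with `h = 𝟙_t` (the same indicator in every coordinate) shows
that the residual `M² h̃(V) + D` integrates to zero over every event `{V ∈ t}`, which is exactly
`E[M² h̃(V) + D | σ(V)] = 0`. Since `h̃(V)` is `σ(V)`-measurable it can be pulled out of the
conditional expectation, leaving `h̃(V) E[M² | σ(V)] + E[D | σ(V)] = 0`, which is solved for `h̃(V)`
wherever `E[M² | σ(V)]` does not vanish.
-/

section CondExpComap

variable {Ω 𝒱 : Type*} [MeasurableSpace Ω] [m𝒱 : MeasurableSpace 𝒱] {P : Measure Ω} {V : Ω → 𝒱}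

theorem MeasureTheory.Integrable.comp_bdd_mul (hV : Measurable V) {g : 𝒱 → ℝ}
    (hg : Measurable g) {C : ℝ} (hC : ∀ v, ‖g v‖ ≤ C) {f : Ω → ℝ} (hf : Integrable f P) :
    Integrable (fun ω => g (V ω) * f ω) P :=
  hf.bdd_mul (hg.comp hV).aestronglyMeasurable (.of_forall fun ω => hC (V ω))

theorem setIntegral_preimage_eq_integral_indicator_comp_mul (hV : Measurable V) {t : Set 𝒱}
    (ht : MeasurableSet t) (f : Ω → ℝ) :
    ∫ ω in V ⁻¹' t, f ω ∂P = ∫ ω, t.indicator 1 (V ω) * f ω ∂P := by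
  rw [← integral_indicator (hV ht)]
  congr 1 with ω
  by_cases hω : V ω ∈ t <;> simp [hω]

theorem condExp_comap_ae_eq_zero_of_forall_integral_comp_mul_eq_zero [IsFiniteMeasure P]
    (hV : Measurable V) {f : Ω → ℝ} (hf : Integrable f P)
    (horth : ∀ g : 𝒱 → ℝ, Measurable g → (∃ C, ∀ v, ‖g v‖ ≤ C) →
      ∫ ω, g (V ω) * f ω ∂P = 0) :
    P[f | MeasurableSpace.comap V m𝒱] =ᵐ[P] 0 := by
  refine (ae_eq_condExp_of_forall_setIntegral_eq hV.comap_le hf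
    (fun _ _ _ => integrableOn_zero) ?_ aestronglyMeasurable_const).symm
  rintro _ ⟨t, ht, rfl⟩ -
  have hbdd : ∀ v, ‖t.indicator (1 : 𝒱 → ℝ) v‖ ≤ 1 := fun v =>
    (norm_indicator_le_norm_self _ v).trans (by simp)
  rw [setIntegral_preimage_eq_integral_indicator_comp_mul hV ht f,
    horth _ (measurable_one.indicator ht) ⟨1, hbdd⟩, integral_zero]

end CondExpComap

theorem ae_eq_neg_condExp_div_of_condExp_mul_add_ae_eq_zero {Ω : Type*} {m mΩ : MeasurableSpace Ω}
    {P : Measure Ω} {X A B : Ω → ℝ} (hX : StronglyMeasurable[m] X) (hA : Integrable A P)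
    (hAX : Integrable (fun ω => A ω * X ω) P) (hB : Integrable B P)
    (hres : P[fun ω => A ω * X ω + B ω | m] =ᵐ[P] 0) (hA0 : ∀ᵐ ω ∂P, P[A | m] ω ≠ 0) :
    X =ᵐ[P] fun ω => -P[B | m] ω / P[A | m] ω := by
  have hXA : X * A = fun ω => A ω * X ω := by ext ω; exact mul_comm _ _
  have hadd := condExp_add hAX hB m
  have hpull := condExp_mul_of_stronglyMeasurable_left hX (hXA ▸ hAX) hA
  rw [hXA] at hpull
  filter_upwards [hres, hadd, hpull, hA0] with ω hresω haddω hpullω hA0ω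
  have hsum : X ω * P[A | m] ω + P[B | m] ω = 0 := by
    have h := haddω.symm.trans hresω
    rwa [Pi.add_apply, hpullω, Pi.mul_apply] at h
  rw [eq_div_iff hA0ω]
  linarith

theorem optimal_index_characterization_general
    {Ω : Type*} [mΩ : MeasurableSpace Ω] {P : Measure Ω} [IsProbabilityMeasure P]
    {𝒱 : Type*} [m𝒱 : MeasurableSpace 𝒱]
    (V : Ω → 𝒱) (hV : Measurable V)
    (p : ℕ)
    (M : Ω → ℝ) (hM2 : MemLp M 2 P)
    (D : Ω → Fin p → ℝ)
    (hD2 : ∀ i, MemLp (fun ω => D ω i) 2 P)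
    (ht : 𝒱 → Fin p → ℝ) (hht : Measurable ht)
    (Ct : ℝ) (htbdd : ∀ v, ‖ht v‖ ≤ Ct)
    -- `−E[h(V) Dᵀ] = E[M² h(V) h̃(V)ᵀ]` for every admissible index function `h`
    (hopt : ∀ (h : 𝒱 → Fin p → ℝ), Measurable h → (∃ C : ℝ, ∀ v, ‖h v‖ ≤ C) →
      ∀ i j, -∫ ω, h (V ω) i * D ω j ∂P = ∫ ω, (M ω) ^ 2 * (h (V ω) i * ht (V ω) j) ∂P) :
    (∀ i, P[fun ω => (M ω) ^ 2 * ht (V ω) i + D ω i | MeasurableSpace.comap V m𝒱]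
        =ᵐ[P] 0) ∧
      ((∀ᵐ ω ∂P, 0 < (P[fun ω' => (M ω') ^ 2 | MeasurableSpace.comap V m𝒱]) ω) →
        ∀ i, (fun ω => ht (V ω) i)
          =ᵐ[P] fun ω => -(P[fun ω' => D ω' i | MeasurableSpace.comap V m𝒱]) ω
            / (P[fun ω' => (M ω') ^ 2 | MeasurableSpace.comap V m𝒱]) ω) := by
  have hD : ∀ i, Integrable (fun ω => D ω i) P := fun i => (hD2 i).integrable one_le_two
  have hht_i : ∀ i, Measurable fun v => ht v i := fun i => (measurable_pi_apply i).comp hht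
  have hht_bdd : ∀ i v, ‖ht v i‖ ≤ Ct := fun i v => (norm_le_pi_norm _ i).trans (htbdd v)
  have hMht : ∀ i, Integrable (fun ω => M ω ^ 2 * ht (V ω) i) P := fun i => by
    simpa only [mul_comm] using hM2.integrable_sq.comp_bdd_mul hV (hht_i i) (hht_bdd i)
  have hres : ∀ i, P[fun ω => M ω ^ 2 * ht (V ω) i + D ω i | MeasurableSpace.comap V m𝒱]
      =ᵐ[P] 0 := by
    refine fun i => condExp_comap_ae_eq_zero_of_forall_integral_comp_mul_eq_zero hV
      ((hMht i).add (hD i)) fun g hg ⟨C, hC⟩ => ?_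
    have hfoc := hopt (fun v _ => g v) (measurable_pi_lambda _ fun _ => hg)
      ⟨C, fun v => (pi_norm_const_le _).trans (hC v)⟩ i i
    calc ∫ ω, g (V ω) * (M ω ^ 2 * ht (V ω) i + D ω i) ∂P
        = ∫ ω, M ω ^ 2 * (g (V ω) * ht (V ω) i) ∂P + ∫ ω, g (V ω) * D ω i ∂P := by
          rw [← integral_add]
          · congr 1 with ω; ring
          · simpa only [mul_left_comm] using (hMht i).comp_bdd_mul hV hg hC
          · exact (hD i).comp_bdd_mul hV hg hC
      _ = 0 := by rw [← hfoc, neg_add_cancel]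
  exact ⟨hres, fun hpos i => ae_eq_neg_condExp_div_of_condExp_mul_add_ae_eq_zero
    ((hht_i i).comp (comap_measurable V)).stronglyMeasurable hM2.integrable_sq (hMht i) (hD i)
    (hres i) (hpos.mono fun _ h => h.ne')⟩

/-- Characterization of the optimal index function (forward direction of
Result 3's proof). If `h̃` is admissible and `−E[h(V) Dᵀ] = E[M² h(V) h̃(V)ᵀ]` for every
admissible `h`, then `E[M² h̃(V) + D | σ(V)] = 0` a.s. componentwise; consequently, if
`E[M² | σ(V)] > 0` a.s., then `h̃(V) = −E[D | σ(V)] (E[M² | σ(V)])⁻¹` a.s. -/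
theorem optimal_index_characterization
    {Ω : Type*} [mΩ : MeasurableSpace Ω] {P : Measure Ω} [IsProbabilityMeasure P]
    {𝒱 : Type*} [m𝒱 : MeasurableSpace 𝒱]
    (V : Ω → 𝒱) (hV : Measurable V)
    (p : ℕ)
    (M : Ω → ℝ) (hM : Measurable M) (hM2 : MemLp M 2 P)
    (D : Ω → Fin p → ℝ) (hD : Measurable D)
    (hD2 : ∀ i, MemLp (fun ω => D ω i) 2 P)
    (ht : 𝒱 → Fin p → ℝ) (hht : Measurable ht)
    (Ct : ℝ) (htbdd : ∀ v, ‖ht v‖ ≤ Ct)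
    -- `−E[h(V) Dᵀ] = E[M² h(V) h̃(V)ᵀ]` for every admissible index function `h`
    (hopt : ∀ (h : 𝒱 → Fin p → ℝ), Measurable h → (∃ C : ℝ, ∀ v, ‖h v‖ ≤ C) →
      ∀ i j, -∫ ω, h (V ω) i * D ω j ∂P = ∫ ω, (M ω) ^ 2 * (h (V ω) i * ht (V ω) j) ∂P) :
    (∀ i, P[fun ω => (M ω) ^ 2 * ht (V ω) i + D ω i | MeasurableSpace.comap V m𝒱]
        =ᵐ[P] 0) ∧
      ((∀ᵐ ω ∂P, 0 < (P[fun ω' => (M ω') ^ 2 | MeasurableSpace.comap V m𝒱]) ω) →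
        ∀ i, (fun ω => ht (V ω) i)
          =ᵐ[P] fun ω => -(P[fun ω' => D ω' i | MeasurableSpace.comap V m𝒱]) ω
            / (P[fun ω' => (M ω') ^ 2 | MeasurableSpace.comap V m𝒱]) ω) :=
  optimal_index_characterization_general (mΩ := mΩ) (m𝒱 := m𝒱) V hV p M hM2 D hD2 ht hht Ct htbdd
    hopt
end

section
/- (Projection inner-product identity from the appendix derivation of the DR linear space.) For every bounded measurable real-valued function g of (Y, V) and all bounded measurable real-valued functions k and k⁰ of V, E[ ( (R/π(V)) · (g(Y, V) − k⁰(V)) − ((1 − R)/(1 − π(V))) · (k⁰(V) − E[g(Y, V) | V, L]) ) · ( R/π(V) − (1 − R)/(1 − π(V)) ) · k(V) ] = E[ k(V) · (E[g(Y, V) | V] − k⁰(V)) · ( 1/π(V) − 1/(1 − π(V)) ) ]. -/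
open MeasureTheory ProbabilityTheory

lemma integrable_of_ae_abs_bound {Ω : Type*} {mΩ : MeasurableSpace Ω} {P : Measure Ω}
    [IsFiniteMeasure P] {f : Ω → ℝ} (hf : AEStronglyMeasurable f P) {C : ℝ}
    (h : ∀ᵐ ω ∂P, |f ω| ≤ C) : Integrable f P :=
  (integrable_const C).mono' hf (by simpa [Real.norm_eq_abs] using h)

lemma abs_mul_div_le_aux {a b A B : ℝ} (ha : |a| ≤ A) (hb : |b| ≤ B) {d p : ℝ}
    (hd : 0 < d) (hp : d ≤ |p|) : |a * b / p| ≤ A * B / d := by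
  rw [abs_div, abs_mul]
  exact div_le_div₀ (mul_nonneg ((abs_nonneg a).trans ha) ((abs_nonneg b).trans hb))
    (mul_le_mul ha hb (abs_nonneg b) ((abs_nonneg a).trans ha)) hd hp

/-- If `R ∈ {0,1}`, `E[R|σ(V)] = π(V)` a.s. and `R ⟂ X | σ(V)`, then
`E[R | σ(V, X)] = π(V)` a.s. -/
lemma condexp_pair_of_condIndepFun
    {Ω : Type*} {mΩ : MeasurableSpace Ω} [StandardBorelSpace Ω] [Nonempty Ω]
    {P : Measure Ω} [IsProbabilityMeasure P]
    {𝒱 𝒳 : Type*} [m𝒱 : MeasurableSpace 𝒱] [m𝒳 : MeasurableSpace 𝒳]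
    (V : Ω → 𝒱) (X : Ω → 𝒳) (hV : Measurable V) (hX : Measurable X)
    (R : Ω → ℝ) (hR : Measurable R) (hR01 : ∀ ω, R ω = 0 ∨ R ω = 1)
    (π : 𝒱 → ℝ) (hπ : Measurable π)
    (hπV : P[R | MeasurableSpace.comap V m𝒱] =ᵐ[P] fun ω => π (V ω))
    (hπ01 : ∀ᵐ ω ∂P, 0 ≤ π (V ω) ∧ π (V ω) ≤ 1)
    (hign : CondIndepFun (MeasurableSpace.comap V m𝒱) hV.comap_le R X P) :
    P[R | MeasurableSpace.comap (fun ω => (V ω, X ω)) inferInstance] =ᵐ[P]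
      fun ω => π (V ω) := by
  have hmV : MeasurableSpace.comap V m𝒱 ≤ mΩ := hV.comap_le
  have hφ : Measurable fun ω => (V ω, X ω) := hV.prodMk hX
  have hmVX : MeasurableSpace.comap (fun ω => (V ω, X ω)) inferInstance ≤ mΩ := hφ.comap_le
  have hRb : ∀ ω, 0 ≤ R ω ∧ R ω ≤ 1 := fun ω => by rcases hR01 ω with h | h <;> simp [h]
  have hRint : Integrable R P :=
    integrable_of_ae_abs_bound hR.aestronglyMeasurable
      (Filter.Eventually.of_forall fun ω => by rw [abs_of_nonneg (hRb ω).1]; exact (hRb ω).2)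
  have hπVmeas : Measurable fun ω => π (V ω) := hπ.comp hV
  have hπVint : Integrable (fun ω => π (V ω)) P :=
    integrable_of_ae_abs_bound hπVmeas.aestronglyMeasurable
      (hπ01.mono fun ω h => by rw [abs_of_nonneg h.1]; exact h.2)
  -- R as an indicator
  have hRind : R = Set.indicator (R ⁻¹' {1}) (fun _ => (1 : ℝ)) := by
    funext ω
    rcases hR01 ω with h | h <;> simp [Set.indicator_apply, Set.mem_preimage, h]
  have hcondR : (P⟦R ⁻¹' {1} | MeasurableSpace.comap V m𝒱⟧) =ᵐ[P] fun ω => π (V ω) := by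
    rw [← hRind]; exact hπV
  -- rectangle set-integral identity
  have hrect : ∀ S : Set 𝒳, MeasurableSet S → ∀ T : Set 𝒱, MeasurableSet T →
      ∫ ω in V ⁻¹' T ∩ X ⁻¹' S, R ω ∂P = ∫ ω in V ⁻¹' T ∩ X ⁻¹' S, π (V ω) ∂P := by
    intro S hS T hT
    have hTmV : MeasurableSet[MeasurableSpace.comap V m𝒱] (V ⁻¹' T) := ⟨T, hT, rfl⟩
    have hImeas : MeasurableSet (R ⁻¹' {1} ∩ X ⁻¹' S) :=
      (hR (measurableSet_singleton 1)).inter (hX hS)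
    have hmulST := (condIndepFun_iff_condExp_inter_preimage_eq_mul hR hX).mp hign
      {1} S (measurableSet_singleton 1) hS
    have hIind : (fun ω => Set.indicator (X ⁻¹' S) R ω)
        = Set.indicator (R ⁻¹' {1} ∩ X ⁻¹' S) (fun _ => (1 : ℝ)) := by
      funext ω
      by_cases hωS : ω ∈ X ⁻¹' S
      · rcases hR01 ω with h | h <;>
          simp [Set.indicator_apply, hωS, h, Set.mem_inter_iff, Set.mem_preimage]
      · simp [Set.indicator_apply, hωS, Set.mem_inter_iff]
    have step1 : ∫ ω in V ⁻¹' T ∩ X ⁻¹' S, R ω ∂P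
        = ∫ ω in V ⁻¹' T, Set.indicator (R ⁻¹' {1} ∩ X ⁻¹' S) (fun _ => (1 : ℝ)) ω ∂P := by
      rw [← setIntegral_indicator (hX hS)]
      exact setIntegral_congr_fun (hV hT) (fun ω _ => congrFun hIind ω)
    have hint1 : Integrable (Set.indicator (R ⁻¹' {1} ∩ X ⁻¹' S) (fun _ => (1 : ℝ))) P :=
      (integrable_const (1 : ℝ)).indicator hImeas
    have step2 : ∫ ω in V ⁻¹' T, Set.indicator (R ⁻¹' {1} ∩ X ⁻¹' S) (fun _ => (1 : ℝ)) ω ∂P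
        = ∫ ω in V ⁻¹' T, (P⟦R ⁻¹' {1} ∩ X ⁻¹' S | MeasurableSpace.comap V m𝒱⟧) ω ∂P :=
      (setIntegral_condExp hmV hint1 hTmV).symm
    -- conditional expectation factorizes
    have hmul2 : (P⟦R ⁻¹' {1} ∩ X ⁻¹' S | MeasurableSpace.comap V m𝒱⟧)
        =ᵐ[P] fun ω => π (V ω) * (P⟦X ⁻¹' S | MeasurableSpace.comap V m𝒱⟧) ω := by
      filter_upwards [hmulST, hcondR] with ω h1 h2
      rw [h1, h2]
    have step3 : ∫ ω in V ⁻¹' T, (P⟦R ⁻¹' {1} ∩ X ⁻¹' S | MeasurableSpace.comap V m𝒱⟧) ω ∂P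
        = ∫ ω in V ⁻¹' T, π (V ω) * (P⟦X ⁻¹' S | MeasurableSpace.comap V m𝒱⟧) ω ∂P :=
      setIntegral_congr_ae (hV hT) (hmul2.mono fun ω h _ => h)
    -- pull-out on the indicator of V⁻¹T times π(V)
    set q : Ω → ℝ := Set.indicator (V ⁻¹' T) (fun ω => π (V ω)) with hq_def
    have hqsm : StronglyMeasurable[MeasurableSpace.comap V m𝒱] q :=
      ((hπ.comp (comap_measurable V)).indicator hTmV).stronglyMeasurable
    have hu_int : Integrable (Set.indicator (X ⁻¹' S) (fun _ => (1 : ℝ))) P :=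
      (integrable_const (1 : ℝ)).indicator (hX hS)
    have hqu_int : Integrable (q * Set.indicator (X ⁻¹' S) (fun _ => (1 : ℝ))) P := by
      refine integrable_of_ae_abs_bound ?_ (C := 1) ?_
      · exact ((hqsm.mono hmV).mul
          ((stronglyMeasurable_const.indicator (hX hS)))).aestronglyMeasurable
      · filter_upwards [hπ01] with ω h
        rw [Pi.mul_apply, abs_mul]
        have h1 : |q ω| ≤ 1 := by
          rw [hq_def]
          by_cases hω : ω ∈ V ⁻¹' T <;>
            simp [Set.indicator_apply, hω, abs_of_nonneg h.1, h.2]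
        have h2 : |Set.indicator (X ⁻¹' S) (fun _ => (1 : ℝ)) ω| ≤ 1 := by
          by_cases hω : ω ∈ X ⁻¹' S <;> simp [Set.indicator_apply, hω]
        calc |q ω| * |Set.indicator (X ⁻¹' S) (fun _ => (1 : ℝ)) ω| ≤ 1 * 1 :=
              mul_le_mul h1 h2 (abs_nonneg _) zero_le_one
          _ = 1 := by ring
    have hpull := condExp_mul_of_stronglyMeasurable_left hqsm hqu_int hu_int
    have step4 : ∫ ω in V ⁻¹' T, π (V ω) * (P⟦X ⁻¹' S | MeasurableSpace.comap V m𝒱⟧) ω ∂P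
        = ∫ ω, q ω * (P⟦X ⁻¹' S | MeasurableSpace.comap V m𝒱⟧) ω ∂P := by
      rw [← integral_indicator (hV hT)]
      congr 1
      funext ω
      by_cases hω : ω ∈ V ⁻¹' T <;> simp [hq_def, Set.indicator_apply, hω]
    have step5 : ∫ ω, q ω * (P⟦X ⁻¹' S | MeasurableSpace.comap V m𝒱⟧) ω ∂P
        = ∫ ω, q ω * Set.indicator (X ⁻¹' S) (fun _ => (1 : ℝ)) ω ∂P := by
      calc ∫ ω, q ω * (P⟦X ⁻¹' S | MeasurableSpace.comap V m𝒱⟧) ω ∂P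
          = ∫ ω, (P[q * Set.indicator (X ⁻¹' S) (fun _ => (1 : ℝ)) |
              MeasurableSpace.comap V m𝒱]) ω ∂P :=
            (integral_congr_ae (hpull.mono fun ω h => by rw [h]; rfl)).symm
        _ = ∫ ω, (q * Set.indicator (X ⁻¹' S) (fun _ => (1 : ℝ))) ω ∂P :=
            integral_condExp hmV
        _ = ∫ ω, q ω * Set.indicator (X ⁻¹' S) (fun _ => (1 : ℝ)) ω ∂P := rfl
    have step6 : ∫ ω, q ω * Set.indicator (X ⁻¹' S) (fun _ => (1 : ℝ)) ω ∂P
        = ∫ ω in V ⁻¹' T ∩ X ⁻¹' S, π (V ω) ∂P := by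
      rw [← setIntegral_indicator (hX hS), ← integral_indicator (hV hT)]
      congr 1
      funext ω
      by_cases hω1 : ω ∈ V ⁻¹' T <;> by_cases hω2 : ω ∈ X ⁻¹' S <;>
        simp [hq_def, Set.indicator_apply, hω1, hω2]
    rw [step1, step2, step3, step4, step5, step6]
  -- withDensity values on sets
  have hR01' : ∀ᵐ ω ∂P, 0 ≤ R ω ∧ R ω ≤ 1 := Filter.Eventually.of_forall hRb
  have hwd : ∀ (f : Ω → ℝ), Measurable f → (∀ᵐ ω ∂P, 0 ≤ f ω ∧ f ω ≤ 1) →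
      ∀ A : Set Ω, MeasurableSet A →
      (P.withDensity fun ω => ENNReal.ofReal (f ω)) A = ENNReal.ofReal (∫ ω in A, f ω ∂P) := by
    intro f hf hf01 A hA
    rw [withDensity_apply _ hA]
    exact (ofReal_integral_eq_lintegral_ofReal
      (integrable_of_ae_abs_bound hf.aestronglyMeasurable.restrict
        (ae_restrict_of_ae (hf01.mono fun ω h => by
          rw [abs_of_nonneg h.1]; exact h.2)))
      (ae_restrict_of_ae (hf01.mono fun ω h => h.1))).symm
  have hfin : ∀ (f : Ω → ℝ), (∀ᵐ ω ∂P, 0 ≤ f ω ∧ f ω ≤ 1) →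
      IsFiniteMeasure (P.withDensity fun ω => ENNReal.ofReal (f ω)) := by
    intro f hf01
    refine isFiniteMeasure_withDensity (ne_of_lt (lt_of_le_of_lt ?_ ENNReal.one_lt_top))
    calc ∫⁻ ω, ENNReal.ofReal (f ω) ∂P ≤ ∫⁻ _, 1 ∂P :=
            lintegral_mono_ae (hf01.mono fun ω h => ENNReal.ofReal_le_one.mpr h.2)
      _ = 1 := by simp
  haveI hfin1 := hfin R hR01'
  haveI hfin2 := hfin _ hπ01
  -- the two measures agree
  have hν : Measure.map (fun ω => (V ω, X ω)) (P.withDensity fun ω => ENNReal.ofReal (R ω))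
      = Measure.map (fun ω => (V ω, X ω))
          (P.withDensity fun ω => ENNReal.ofReal (π (V ω))) := by
    haveI := Measure.isFiniteMeasure_map (P.withDensity fun ω => ENNReal.ofReal (R ω))
      (fun ω => (V ω, X ω))
    haveI := Measure.isFiniteMeasure_map (P.withDensity fun ω => ENNReal.ofReal (π (V ω)))
      (fun ω => (V ω, X ω))
    refine ext_of_generate_finite _ generateFrom_prod.symm isPiSystem_prod ?_ ?_
    · rintro s ⟨T, hT, S, hS, rfl⟩
      have hT' : MeasurableSet T := hT
      have hS' : MeasurableSet S := hS
      rw [Measure.map_apply hφ (hT'.prod hS'), Measure.map_apply hφ (hT'.prod hS'),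
        Set.mk_preimage_prod, hwd R hR hR01' _ ((hV hT').inter (hX hS')),
        hwd _ hπVmeas hπ01 _ ((hV hT').inter (hX hS')), hrect S hS' T hT']
    · rw [Measure.map_apply hφ MeasurableSet.univ, Measure.map_apply hφ MeasurableSet.univ,
        Set.preimage_univ, hwd R hR hR01' _ MeasurableSet.univ,
        hwd _ hπVmeas hπ01 _ MeasurableSet.univ]
      congr 1
      rw [setIntegral_univ, setIntegral_univ]
      calc ∫ ω, R ω ∂P = ∫ ω, (P[R | MeasurableSpace.comap V m𝒱]) ω ∂P :=
            (integral_condExp hmV).symm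
        _ = ∫ ω, π (V ω) ∂P := integral_congr_ae hπV
  -- set-integral identity on σ(V, X)
  have hsetEq : ∀ s, MeasurableSet[MeasurableSpace.comap (fun ω => (V ω, X ω)) inferInstance] s →
      ∫ ω in s, π (V ω) ∂P = ∫ ω in s, R ω ∂P := by
    rintro _ ⟨B, hB, rfl⟩
    have h1 := congrArg (fun μ : Measure (𝒱 × 𝒳) => μ B) hν
    rw [Measure.map_apply hφ hB, Measure.map_apply hφ hB,
      hwd R hR hR01' _ (hφ hB), hwd _ hπVmeas hπ01 _ (hφ hB)] at h1
    exact ((ENNReal.ofReal_eq_ofReal_iff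
      (setIntegral_nonneg (hφ hB) fun ω _ => (hRb ω).1)
      (setIntegral_nonneg_ae (hφ hB) (hπ01.mono fun ω h _ => h.1))).mp h1).symm
  exact (ae_eq_condExp_of_forall_setIntegral_eq hmVX hRint
    (fun s _ _ => hπVint.integrableOn) (fun s hs _ => hsetEq s hs)
    ((hπ.comp (measurable_fst.comp
      (comap_measurable (fun ω => (V ω, X ω))))).stronglyMeasurable.aestronglyMeasurable)).symm

/-- Projection inner-product identity from the appendix derivation of the
DR linear space: for bounded measurable `g` of `(Y, V)` and bounded measurable `k, k⁰` of `V`,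
`E[((R/π(V)) (g − k⁰(V)) − ((1−R)/(1−π(V))) (k⁰(V) − E[g|V,L])) (R/π(V) − (1−R)/(1−π(V))) k(V)]`
`= E[k(V) (E[g|V] − k⁰(V)) (1/π(V) − 1/(1−π(V)))]`. -/
theorem dr_projection_inner_product_identity
    {Ω : Type*} {mΩ : MeasurableSpace Ω} [StandardBorelSpace Ω] [Nonempty Ω]
    {P : Measure Ω} [IsProbabilityMeasure P]
    {𝒱 𝓛 𝒴 : Type*} [m𝒱 : MeasurableSpace 𝒱] [m𝓛 : MeasurableSpace 𝓛]
    [m𝒴 : MeasurableSpace 𝒴]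
    (V : Ω → 𝒱) (L : Ω → 𝓛) (Y : Ω → 𝒴)
    (hV : Measurable V) (hL : Measurable L) (hY : Measurable Y)
    (R : Ω → ℝ) (hR : Measurable R) (hR01 : ∀ ω, R ω = 0 ∨ R ω = 1)
    (π : 𝒱 → ℝ) (hπ : Measurable π)
    -- `π(V)` is a version of `E[R | σ(V)]`
    (hπV : P[R | MeasurableSpace.comap V m𝒱] =ᵐ[P] fun ω => π (V ω))
    -- positivity
    (δ : ℝ) (hδ0 : 0 < δ) (hδhalf : δ < 1 / 2)
    (hpos : ∀ᵐ ω ∂P, δ ≤ π (V ω) ∧ π (V ω) ≤ 1 - δ)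
    -- ignorability: `R ⟂ (Y, L) | σ(V)`
    (hign : CondIndepFun (MeasurableSpace.comap V m𝒱) (hV.comap_le) R
      (fun ω => (Y ω, L ω)) P)
    (g : 𝒴 × 𝒱 → ℝ) (hg : Measurable g) (Cg : ℝ) (hgbdd : ∀ x, |g x| ≤ Cg)
    (k : 𝒱 → ℝ) (hk : Measurable k) (Ck : ℝ) (hkbdd : ∀ v, |k v| ≤ Ck)
    (k0 : 𝒱 → ℝ) (hk0 : Measurable k0) (Ck0 : ℝ) (hk0bdd : ∀ v, |k0 v| ≤ Ck0) :
    ∫ ω, ((R ω / π (V ω)) * (g (Y ω, V ω) - k0 (V ω))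
          - ((1 - R ω) / (1 - π (V ω)))
            * (k0 (V ω)
              - (P[fun ω' => g (Y ω', V ω')
                  | MeasurableSpace.comap (fun ω' => (V ω', L ω')) inferInstance]) ω))
        * (R ω / π (V ω) - (1 - R ω) / (1 - π (V ω))) * k (V ω) ∂P
      = ∫ ω, k (V ω)
          * ((P[fun ω' => g (Y ω', V ω') | MeasurableSpace.comap V m𝒱]) ω - k0 (V ω))
          * (1 / π (V ω) - 1 / (1 - π (V ω))) ∂P := by
  classical
  have hφL : Measurable fun ω => (V ω, L ω) := hV.prodMk hL
  have hφY : Measurable fun ω => (V ω, Y ω) := hV.prodMk hY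
  have hmV : MeasurableSpace.comap V m𝒱 ≤ mΩ := hV.comap_le
  have hmVL : MeasurableSpace.comap (fun ω' => (V ω', L ω')) inferInstance ≤ mΩ :=
    hφL.comap_le
  have hmVY : MeasurableSpace.comap (fun ω => (V ω, Y ω)) inferInstance ≤ mΩ :=
    hφY.comap_le
  have hle : MeasurableSpace.comap V m𝒱
      ≤ MeasurableSpace.comap (fun ω' => (V ω', L ω')) inferInstance := by
    have h1 : MeasurableSpace.comap V m𝒱
        = MeasurableSpace.comap (fun ω' => (V ω', L ω'))
            (MeasurableSpace.comap Prod.fst m𝒱) := by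
      rw [MeasurableSpace.comap_comp]; rfl
    rw [h1]
    exact MeasurableSpace.comap_mono measurable_fst.comap_le
  obtain ⟨ω₀⟩ := ‹Nonempty Ω›
  have hCg0 : 0 ≤ Cg := (abs_nonneg _).trans (hgbdd (Y ω₀, V ω₀))
  have hCk : 0 ≤ Ck := (abs_nonneg _).trans (hkbdd (V ω₀))
  have hCk0 : 0 ≤ Ck0 := (abs_nonneg _).trans (hk0bdd (V ω₀))
  have hG : Measurable fun ω => g (Y ω, V ω) := hg.comp (hY.prodMk hV)
  have hπ01 : ∀ᵐ ω ∂P, 0 ≤ π (V ω) ∧ π (V ω) ≤ 1 := hpos.mono fun ω h =>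
    ⟨hδ0.le.trans h.1, h.2.trans (by linarith)⟩
  have hπδ : ∀ᵐ ω ∂P, δ ≤ π (V ω) ∧ δ ≤ 1 - π (V ω) := hpos.mono fun ω h =>
    ⟨h.1, by linarith [h.2]⟩
  have hRb : ∀ ω, |R ω| ≤ 1 := fun ω => by rcases hR01 ω with h | h <;> simp [h]
  have hRint : Integrable R P :=
    integrable_of_ae_abs_bound hR.aestronglyMeasurable (Filter.Eventually.of_forall hRb)
  -- conditional expectations of R given the pairs
  have hignY : CondIndepFun (MeasurableSpace.comap V m𝒱) hV.comap_le R Y P :=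
    hign.comp measurable_id measurable_fst
  have hignL : CondIndepFun (MeasurableSpace.comap V m𝒱) hV.comap_le R L P :=
    hign.comp measurable_id measurable_snd
  have hπVY := condexp_pair_of_condIndepFun V Y hV hY R hR hR01 π hπ hπV hπ01 hignY
  have hπVL := condexp_pair_of_condIndepFun V L hV hL R hR hR01 π hπ hπV hπ01 hignL
  -- abbreviations
  set m1 : Ω → ℝ := P[fun ω' => g (Y ω', V ω')
      | MeasurableSpace.comap (fun ω' => (V ω', L ω')) inferInstance] with hm1_def
  set μ1 : Ω → ℝ := P[fun ω' => g (Y ω', V ω') | MeasurableSpace.comap V m𝒱] with hμ1_def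
  have hsm_m1 : StronglyMeasurable[MeasurableSpace.comap (fun ω' => (V ω', L ω'))
      inferInstance] m1 := stronglyMeasurable_condExp
  have hsm_μ1 : StronglyMeasurable[MeasurableSpace.comap V m𝒱] μ1 :=
    stronglyMeasurable_condExp
  have hm1meas : Measurable m1 := (hsm_m1.mono hmVL).measurable
  have hμ1meas : Measurable μ1 := (hsm_μ1.mono hmV).measurable
  have hm1b : ∀ᵐ ω ∂P, |m1 ω| ≤ Cg := by
    rw [hm1_def]
    exact ae_bdd_condExp_of_ae_bdd (R := ⟨Cg, hCg0⟩)
      (Filter.Eventually.of_forall fun ω => hgbdd _)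
  have hμ1b : ∀ᵐ ω ∂P, |μ1 ω| ≤ Cg := by
    rw [hμ1_def]
    exact ae_bdd_condExp_of_ae_bdd (R := ⟨Cg, hCg0⟩)
      (Filter.Eventually.of_forall fun ω => hgbdd _)
  have hm1int : Integrable m1 P := by rw [hm1_def]; exact integrable_condExp
  -- the two pieces
  set W₁ : Ω → ℝ := fun ω => (g (Y ω, V ω) - k0 (V ω)) * k (V ω) / (π (V ω)) ^ 2
    with hW₁_def
  set W₂ : Ω → ℝ := fun ω => (k0 (V ω) - m1 ω) * k (V ω) / (1 - π (V ω)) ^ 2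
    with hW₂_def
  have hpt : ∀ᵐ ω ∂P, ((R ω / π (V ω)) * (g (Y ω, V ω) - k0 (V ω))
          - ((1 - R ω) / (1 - π (V ω))) * (k0 (V ω) - m1 ω))
        * (R ω / π (V ω) - (1 - R ω) / (1 - π (V ω))) * k (V ω)
      = R ω * W₁ ω + (1 - R ω) * W₂ ω := by
    filter_upwards [hpos] with ω h
    have hp : π (V ω) ≠ 0 := by linarith [h.1]
    have hq : 1 - π (V ω) ≠ 0 := by
      have : δ ≤ 1 - π (V ω) := by linarith [h.2]
      linarith
    simp only [hW₁_def, hW₂_def]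
    rcases hR01 ω with h' | h' <;> rw [h'] <;> field_simp <;> (first | ring1 | (left; (first | trivial | ring1)))
  -- measurability
  have hW₁meas : Measurable W₁ :=
    ((hG.sub (hk0.comp hV)).mul (hk.comp hV)).div ((hπ.comp hV).pow_const 2)
  have hW₂meas : Measurable W₂ :=
    (((hk0.comp hV).sub hm1meas).mul (hk.comp hV)).div
      ((measurable_const.sub (hπ.comp hV)).pow_const 2)
  -- a.e. bounds
  have habs1 : ∀ ω, |g (Y ω, V ω) - k0 (V ω)| ≤ Cg + Ck0 := fun ω =>
    (abs_sub _ _).trans (add_le_add (hgbdd _) (hk0bdd _))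
  have hW₁b : ∀ᵐ ω ∂P, |W₁ ω| ≤ (Cg + Ck0) * Ck / δ ^ 2 := by
    filter_upwards [hpos] with ω h
    have hp : δ ^ 2 ≤ |π (V ω) ^ 2| := by
      rw [abs_of_nonneg (by positivity)]
      exact pow_le_pow_left₀ hδ0.le h.1 2
    simpa only [hW₁_def] using
      abs_mul_div_le_aux (habs1 ω) (hkbdd _) (pow_pos hδ0 2) hp
  have hW₂b : ∀ᵐ ω ∂P, |W₂ ω| ≤ (Ck0 + Cg) * Ck / δ ^ 2 := by
    filter_upwards [hpos, hm1b] with ω h hm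
    have hq : δ ^ 2 ≤ |(1 - π (V ω)) ^ 2| := by
      rw [abs_of_nonneg (by positivity)]
      exact pow_le_pow_left₀ hδ0.le (by linarith [h.2]) 2
    have habs2 : |k0 (V ω) - m1 ω| ≤ Ck0 + Cg :=
      (abs_sub _ _).trans (add_le_add (hk0bdd _) hm)
    simpa only [hW₂_def] using abs_mul_div_le_aux habs2 (hkbdd _) (pow_pos hδ0 2) hq
  -- integrabilities
  have hW₁int : Integrable W₁ P := integrable_of_ae_abs_bound hW₁meas.aestronglyMeasurable hW₁b
  have hW₂int : Integrable W₂ P := integrable_of_ae_abs_bound hW₂meas.aestronglyMeasurable hW₂b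
  have hW₁Rint : Integrable (W₁ * R) P := by
    refine integrable_of_ae_abs_bound ((hW₁meas.mul hR).aestronglyMeasurable)
      (C := (Cg + Ck0) * Ck / δ ^ 2) ?_
    filter_upwards [hW₁b] with ω h
    rw [Pi.mul_apply, abs_mul]
    calc |W₁ ω| * |R ω| ≤ ((Cg + Ck0) * Ck / δ ^ 2) * 1 :=
          mul_le_mul h (hRb ω) (abs_nonneg _) (by positivity)
      _ = (Cg + Ck0) * Ck / δ ^ 2 := mul_one _
  have hW₂Rint : Integrable (W₂ * R) P := by
    refine integrable_of_ae_abs_bound ((hW₂meas.mul hR).aestronglyMeasurable)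
      (C := (Ck0 + Cg) * Ck / δ ^ 2) ?_
    filter_upwards [hW₂b] with ω h
    rw [Pi.mul_apply, abs_mul]
    calc |W₂ ω| * |R ω| ≤ ((Ck0 + Cg) * Ck / δ ^ 2) * 1 :=
          mul_le_mul h (hRb ω) (abs_nonneg _) (by positivity)
      _ = (Ck0 + Cg) * Ck / δ ^ 2 := mul_one _
  have hπW₂int : Integrable (fun ω => π (V ω) * W₂ ω) P := by
    refine integrable_of_ae_abs_bound (((hπ.comp hV).mul hW₂meas).aestronglyMeasurable)
      (C := (Ck0 + Cg) * Ck / δ ^ 2) ?_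
    filter_upwards [hW₂b, hπ01] with ω h hp
    rw [abs_mul]
    calc |π (V ω)| * |W₂ ω| ≤ 1 * ((Ck0 + Cg) * Ck / δ ^ 2) :=
          mul_le_mul (by rw [abs_of_nonneg hp.1]; exact hp.2) h (abs_nonneg _) zero_le_one
      _ = (Ck0 + Cg) * Ck / δ ^ 2 := one_mul _
  -- Step A: replace R by π(V) against W₁, conditioning on σ(V, Y)
  have hVmY : Measurable[MeasurableSpace.comap (fun ω => (V ω, Y ω)) inferInstance] V :=
    measurable_fst.comp (comap_measurable _)
  have hYmY : Measurable[MeasurableSpace.comap (fun ω => (V ω, Y ω)) inferInstance] Y :=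
    measurable_snd.comp (comap_measurable _)
  have hW₁sm : StronglyMeasurable[MeasurableSpace.comap (fun ω => (V ω, Y ω))
      inferInstance] W₁ :=
    (((hg.comp (hYmY.prodMk hVmY)).sub (hk0.comp hVmY)).mul (hk.comp hVmY)).div
      ((hπ.comp hVmY).pow_const 2) |>.stronglyMeasurable
  have hA : ∫ ω, R ω * W₁ ω ∂P = ∫ ω, π (V ω) * W₁ ω ∂P := by
    have hpull := condExp_mul_of_stronglyMeasurable_left hW₁sm hW₁Rint hRint
    have heq : (P[W₁ * R | MeasurableSpace.comap (fun ω => (V ω, Y ω)) inferInstance])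
        =ᵐ[P] fun ω => π (V ω) * W₁ ω := by
      filter_upwards [hpull, hπVY] with ω h1 h2
      rw [h1, Pi.mul_apply, h2]; ring
    calc ∫ ω, R ω * W₁ ω ∂P = ∫ ω, (W₁ * R) ω ∂P := by
          refine integral_congr_ae (Filter.Eventually.of_forall fun ω => ?_)
          rw [Pi.mul_apply]; ring
      _ = ∫ ω, (P[W₁ * R | MeasurableSpace.comap (fun ω => (V ω, Y ω)) inferInstance]) ω ∂P :=
          (integral_condExp hmVY).symm
      _ = ∫ ω, π (V ω) * W₁ ω ∂P := integral_congr_ae heq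
  -- Step B: replace 1 - R by 1 - π(V) against W₂, conditioning on σ(V, L)
  have hVmL : Measurable[MeasurableSpace.comap (fun ω' => (V ω', L ω')) inferInstance] V :=
    measurable_fst.comp (comap_measurable _)
  have hW₂sm : StronglyMeasurable[MeasurableSpace.comap (fun ω' => (V ω', L ω'))
      inferInstance] W₂ :=
    ((((hk0.comp hVmL).sub hsm_m1.measurable).mul (hk.comp hVmL)).div
      ((measurable_const.sub (hπ.comp hVmL)).pow_const 2)).stronglyMeasurable
  have hB : ∫ ω, (1 - R ω) * W₂ ω ∂P = ∫ ω, (1 - π (V ω)) * W₂ ω ∂P := by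
    have hpull := condExp_mul_of_stronglyMeasurable_left hW₂sm hW₂Rint hRint
    have heq : (P[W₂ * R | MeasurableSpace.comap (fun ω' => (V ω', L ω')) inferInstance])
        =ᵐ[P] fun ω => π (V ω) * W₂ ω := by
      filter_upwards [hpull, hπVL] with ω h1 h2
      rw [h1, Pi.mul_apply, h2]; ring
    have hRW₂ : ∫ ω, R ω * W₂ ω ∂P = ∫ ω, π (V ω) * W₂ ω ∂P :=
      calc ∫ ω, R ω * W₂ ω ∂P = ∫ ω, (W₂ * R) ω ∂P := by
            refine integral_congr_ae (Filter.Eventually.of_forall fun ω => ?_)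
            rw [Pi.mul_apply]; ring
        _ = ∫ ω, (P[W₂ * R | MeasurableSpace.comap (fun ω' => (V ω', L ω'))
              inferInstance]) ω ∂P := (integral_condExp hmVL).symm
        _ = ∫ ω, π (V ω) * W₂ ω ∂P := integral_congr_ae heq
    have hRW₂int : Integrable (fun ω => R ω * W₂ ω) P := by
      refine hW₂Rint.congr ?_
      exact Filter.Eventually.of_forall fun ω => by rw [Pi.mul_apply]; ring
    calc ∫ ω, (1 - R ω) * W₂ ω ∂P = ∫ ω, (W₂ ω - R ω * W₂ ω) ∂P := by
          refine integral_congr_ae (Filter.Eventually.of_forall fun ω => ?_); ring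
      _ = ∫ ω, W₂ ω ∂P - ∫ ω, R ω * W₂ ω ∂P := integral_sub hW₂int hRW₂int
      _ = ∫ ω, W₂ ω ∂P - ∫ ω, π (V ω) * W₂ ω ∂P := by rw [hRW₂]
      _ = ∫ ω, (W₂ ω - π (V ω) * W₂ ω) ∂P := (integral_sub hW₂int hπW₂int).symm
      _ = ∫ ω, (1 - π (V ω)) * W₂ ω ∂P := by
          refine integral_congr_ae (Filter.Eventually.of_forall fun ω => ?_); ring
  -- product integrability helper
  have hmulint : ∀ (u v : Ω → ℝ), Measurable u → Measurable v → ∀ (Cu Cv : ℝ), 0 ≤ Cu →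
      (∀ᵐ ω ∂P, |u ω| ≤ Cu) → (∀ᵐ ω ∂P, |v ω| ≤ Cv) →
      Integrable (u * v) P := by
    intro u v hu hv Cu Cv hCu hub hvb
    refine integrable_of_ae_abs_bound ((hu.mul hv).aestronglyMeasurable) (C := Cu * Cv) ?_
    filter_upwards [hub, hvb] with ω h1 h2
    rw [Pi.mul_apply, abs_mul]
    exact mul_le_mul h1 h2 (abs_nonneg _) hCu
  -- the σ(V)-measurable factors
  set h₁ : Ω → ℝ := fun ω => k (V ω) / π (V ω) with hh₁_def
  set h₂ : Ω → ℝ := fun ω => k (V ω) / (1 - π (V ω)) with hh₂_def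
  have hh₁sm : StronglyMeasurable[MeasurableSpace.comap V m𝒱] h₁ :=
    ((hk.comp (comap_measurable V)).div (hπ.comp (comap_measurable V))).stronglyMeasurable
  have hh₂sm : StronglyMeasurable[MeasurableSpace.comap V m𝒱] h₂ :=
    ((hk.comp (comap_measurable V)).div
      (measurable_const.sub (hπ.comp (comap_measurable V)))).stronglyMeasurable
  have hh₁meas : Measurable h₁ := (hk.comp hV).div (hπ.comp hV)
  have hh₂meas : Measurable h₂ := (hk.comp hV).div (measurable_const.sub (hπ.comp hV))
  have hh₁b : ∀ᵐ ω ∂P, |h₁ ω| ≤ Ck / δ := by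
    filter_upwards [hpos] with ω h
    simp only [hh₁_def]
    calc |k (V ω) / π (V ω)| = |k (V ω)| / |π (V ω)| := abs_div _ _
      _ ≤ Ck / δ := div_le_div₀ hCk (hkbdd _) hδ0
          (by rw [abs_of_nonneg (by linarith [h.1])]; exact h.1)
  have hh₂b : ∀ᵐ ω ∂P, |h₂ ω| ≤ Ck / δ := by
    filter_upwards [hpos] with ω h
    simp only [hh₂_def]
    calc |k (V ω) / (1 - π (V ω))| = |k (V ω)| / |1 - π (V ω)| := abs_div _ _
      _ ≤ Ck / δ := div_le_div₀ hCk (hkbdd _) hδ0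
          (by rw [abs_of_nonneg (by linarith [h.2])]; exact (by linarith [h.2]))
  -- integrable building blocks
  have hGfint : Integrable (fun ω => g (Y ω, V ω)) P :=
    integrable_of_ae_abs_bound hG.aestronglyMeasurable
      (Filter.Eventually.of_forall fun ω => hgbdd _)
  have hk0Vint : Integrable (fun ω => k0 (V ω)) P :=
    integrable_of_ae_abs_bound (hk0.comp hV).aestronglyMeasurable
      (Filter.Eventually.of_forall fun ω => hk0bdd _)
  have hμ1int : Integrable μ1 P := by rw [hμ1_def]; exact integrable_condExp
  have hE₁meas : Measurable ((fun ω => g (Y ω, V ω)) - fun ω => k0 (V ω)) :=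
    hG.sub (hk0.comp hV)
  have hE₂meas : Measurable ((fun ω => k0 (V ω)) - m1) := (hk0.comp hV).sub hm1meas
  have hE₁b : ∀ᵐ ω ∂P, |((fun ω => g (Y ω, V ω)) - fun ω => k0 (V ω)) ω| ≤ Cg + Ck0 :=
    Filter.Eventually.of_forall fun ω => by rw [Pi.sub_apply]; exact habs1 ω
  have hE₂b : ∀ᵐ ω ∂P, |((fun ω => k0 (V ω)) - m1) ω| ≤ Ck0 + Cg := by
    filter_upwards [hm1b] with ω h
    rw [Pi.sub_apply]
    exact (abs_sub _ _).trans (add_le_add (hk0bdd _) h)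
  have hE₁int : Integrable ((fun ω => g (Y ω, V ω)) - fun ω => k0 (V ω)) P :=
    hGfint.sub hk0Vint
  have hE₂int : Integrable ((fun ω => k0 (V ω)) - m1) P := hk0Vint.sub hm1int
  have hh₁E₁int : Integrable (h₁ * ((fun ω => g (Y ω, V ω)) - fun ω => k0 (V ω))) P :=
    hmulint _ _ hh₁meas hE₁meas (Ck / δ) (Cg + Ck0) (by positivity) hh₁b hE₁b
  have hh₂E₂int : Integrable (h₂ * ((fun ω => k0 (V ω)) - m1)) P :=
    hmulint _ _ hh₂meas hE₂meas (Ck / δ) (Ck0 + Cg) (by positivity) hh₂b hE₂b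
  -- conditional expectations of the differences
  have hcondE₁ : P[(fun ω => g (Y ω, V ω)) - (fun ω => k0 (V ω))
        | MeasurableSpace.comap V m𝒱] =ᵐ[P] μ1 - fun ω => k0 (V ω) := by
    have h1 := condExp_sub (μ := P) (m := MeasurableSpace.comap V m𝒱) hGfint hk0Vint
    rw [condExp_of_stronglyMeasurable (f := fun ω => k0 (V ω)) hmV
      ((hk0.comp (comap_measurable V)).stronglyMeasurable) hk0Vint] at h1
    exact h1
  have hcondE₂ : P[(fun ω => k0 (V ω)) - m1
        | MeasurableSpace.comap V m𝒱] =ᵐ[P] (fun ω => k0 (V ω)) - μ1 := by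
    have h1 := condExp_sub (μ := P) (m := MeasurableSpace.comap V m𝒱) hk0Vint hm1int
    rw [condExp_of_stronglyMeasurable (f := fun ω => k0 (V ω)) hmV
      ((hk0.comp (comap_measurable V)).stronglyMeasurable) hk0Vint] at h1
    have h2 : P[m1 | MeasurableSpace.comap V m𝒱] =ᵐ[P] μ1 := by
      rw [hm1_def, hμ1_def]
      exact condExp_condExp_of_le hle hmVL
    refine h1.trans ?_
    filter_upwards [h2] with ω hω
    rw [Pi.sub_apply, Pi.sub_apply, hω]
  -- rewrite the two integrals using the pull-out property
  have hA2 : ∫ ω, π (V ω) * W₁ ω ∂P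
      = ∫ ω, (h₁ * ((fun ω => g (Y ω, V ω)) - fun ω => k0 (V ω))) ω ∂P := by
    refine integral_congr_ae ?_
    filter_upwards [hpos] with ω h
    have hp : π (V ω) ≠ 0 := by linarith [h.1]
    simp only [hW₁_def, hh₁_def, Pi.mul_apply, Pi.sub_apply]
    field_simp
  have hB2 : ∫ ω, (1 - π (V ω)) * W₂ ω ∂P
      = ∫ ω, (h₂ * ((fun ω => k0 (V ω)) - m1)) ω ∂P := by
    refine integral_congr_ae ?_
    filter_upwards [hpos] with ω h
    have hq : 1 - π (V ω) ≠ 0 := by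
      have : δ ≤ 1 - π (V ω) := by linarith [h.2]
      linarith
    simp only [hW₂_def, hh₂_def, Pi.mul_apply, Pi.sub_apply]
    field_simp
  have hA3 : ∫ ω, (h₁ * ((fun ω => g (Y ω, V ω)) - fun ω => k0 (V ω))) ω ∂P
      = ∫ ω, h₁ ω * (μ1 ω - k0 (V ω)) ∂P := by
    have hpullA := condExp_mul_of_stronglyMeasurable_left hh₁sm hh₁E₁int hE₁int
    calc ∫ ω, (h₁ * ((fun ω => g (Y ω, V ω)) - fun ω => k0 (V ω))) ω ∂P
        = ∫ ω, (P[h₁ * ((fun ω => g (Y ω, V ω)) - fun ω => k0 (V ω))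
            | MeasurableSpace.comap V m𝒱]) ω ∂P := (integral_condExp hmV).symm
      _ = ∫ ω, h₁ ω * (μ1 ω - k0 (V ω)) ∂P := by
          refine integral_congr_ae ?_
          filter_upwards [hpullA, hcondE₁] with ω h1 h2
          rw [h1, Pi.mul_apply, h2, Pi.sub_apply]
  have hB3 : ∫ ω, (h₂ * ((fun ω => k0 (V ω)) - m1)) ω ∂P
      = ∫ ω, h₂ ω * (k0 (V ω) - μ1 ω) ∂P := by
    have hpullB := condExp_mul_of_stronglyMeasurable_left hh₂sm hh₂E₂int hE₂int
    calc ∫ ω, (h₂ * ((fun ω => k0 (V ω)) - m1)) ω ∂P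
        = ∫ ω, (P[h₂ * ((fun ω => k0 (V ω)) - m1)
            | MeasurableSpace.comap V m𝒱]) ω ∂P := (integral_condExp hmV).symm
      _ = ∫ ω, h₂ ω * (k0 (V ω) - μ1 ω) ∂P := by
          refine integral_congr_ae ?_
          filter_upwards [hpullB, hcondE₂] with ω h1 h2
          rw [h1, Pi.mul_apply, h2, Pi.sub_apply]
  -- remaining integrabilities for the final assembly
  have hRW₁int : Integrable (fun ω => R ω * W₁ ω) P :=
    hW₁Rint.congr (Filter.Eventually.of_forall fun ω => by rw [Pi.mul_apply]; ring)
  have hRW₂int : Integrable (fun ω => R ω * W₂ ω) P :=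
    hW₂Rint.congr (Filter.Eventually.of_forall fun ω => by rw [Pi.mul_apply]; ring)
  have h1RW₂int : Integrable (fun ω => (1 - R ω) * W₂ ω) P :=
    (hW₂int.sub hRW₂int).congr (Filter.Eventually.of_forall fun ω => by
      rw [Pi.sub_apply]; ring)
  have hfin1 : Integrable (fun ω => h₁ ω * (μ1 ω - k0 (V ω))) P := by
    refine integrable_of_ae_abs_bound
      ((hh₁meas.mul (hμ1meas.sub (hk0.comp hV))).aestronglyMeasurable)
      (C := (Ck / δ) * (Cg + Ck0)) ?_
    filter_upwards [hh₁b, hμ1b] with ω h1 h2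
    rw [abs_mul]
    exact mul_le_mul h1 ((abs_sub _ _).trans (add_le_add h2 (hk0bdd _)))
      (abs_nonneg _) (by positivity)
  have hfin2 : Integrable (fun ω => h₂ ω * (k0 (V ω) - μ1 ω)) P := by
    refine integrable_of_ae_abs_bound
      ((hh₂meas.mul ((hk0.comp hV).sub hμ1meas)).aestronglyMeasurable)
      (C := (Ck / δ) * (Ck0 + Cg)) ?_
    filter_upwards [hh₂b, hμ1b] with ω h1 h2
    rw [abs_mul]
    exact mul_le_mul h1 ((abs_sub _ _).trans (add_le_add (hk0bdd _) h2))
      (abs_nonneg _) (by positivity)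
  -- final assembly
  calc ∫ ω, ((R ω / π (V ω)) * (g (Y ω, V ω) - k0 (V ω))
          - ((1 - R ω) / (1 - π (V ω))) * (k0 (V ω) - m1 ω))
        * (R ω / π (V ω) - (1 - R ω) / (1 - π (V ω))) * k (V ω) ∂P
      = ∫ ω, (R ω * W₁ ω + (1 - R ω) * W₂ ω) ∂P := integral_congr_ae hpt
    _ = (∫ ω, R ω * W₁ ω ∂P) + ∫ ω, (1 - R ω) * W₂ ω ∂P := integral_add hRW₁int h1RW₂int
    _ = (∫ ω, π (V ω) * W₁ ω ∂P) + ∫ ω, (1 - π (V ω)) * W₂ ω ∂P := by rw [hA, hB]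
    _ = (∫ ω, (h₁ * ((fun ω => g (Y ω, V ω)) - fun ω => k0 (V ω))) ω ∂P)
        + ∫ ω, (h₂ * ((fun ω => k0 (V ω)) - m1)) ω ∂P := by rw [hA2, hB2]
    _ = (∫ ω, h₁ ω * (μ1 ω - k0 (V ω)) ∂P) + ∫ ω, h₂ ω * (k0 (V ω) - μ1 ω) ∂P := by
        rw [hA3, hB3]
    _ = ∫ ω, (h₁ ω * (μ1 ω - k0 (V ω)) + h₂ ω * (k0 (V ω) - μ1 ω)) ∂P :=
        (integral_add hfin1 hfin2).symm
    _ = ∫ ω, k (V ω) * (μ1 ω - k0 (V ω)) * (1 / π (V ω) - 1 / (1 - π (V ω))) ∂P := by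
        refine integral_congr_ae (Filter.Eventually.of_forall fun ω => ?_)
        simp only [hh₁_def, hh₂_def]
        ring
end
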